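/- arXiv:1911.04438 — 5 statements merged into one kernel-verified Lean document; each statement's English description precedes it below -/
import Mathlib

section
/- (Quantitative pointwise form of Lemma 2.12(4).) For every integer n ≥ 1 and every ε ∈ (0,1) there exists ε₀ ∈ (0,ε) with the following property: for every symmetric bilinear form b on ℝ^{n+1} satisfying |b(e_μ,e_ν) − η(e_μ,e_ν)| < ε₀ for all 0 ≤ μ,ν ≤ n, and every nonzero X ∈ ℝ^{n+1}: (i) if η^ε(X) < 0 then b(X,X) < η^ε(X), in particular b(X,X) < 0; and (ii) if b(X,X) ≤ 0 then η^{−ε}(X) < 0. -/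
open MeasureTheory Set Filter

noncomputable section

/-- `ℝ^{n+1}` with the Euclidean norm. -/
abbrev Esp (n : ℕ) : Type := EuclideanSpace ℝ (Fin (n + 1))

/-- The standard basis vector `e_μ` of `ℝ^{n+1}`. -/
def ee (n : ℕ) (μ : Fin (n + 1)) : Esp n := EuclideanSpace.single μ (1 : ℝ)

/-- The quadratic form `η^α(X) = -((1-α)/(1+α))·X₀² + ∑_{i=1}^n Xᵢ²`. -/
def etaQ (n : ℕ) (α : ℝ) (X : Esp n) : ℝ :=
  -((1 - α) / (1 + α)) * X 0 ^ 2 + ∑ i ∈ Finset.univ.erase (0 : Fin (n + 1)), X i ^ 2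

/-- The standard Minkowski bilinear form `η(v,w) = -v₀w₀ + ∑_{i=1}^n vᵢwᵢ`. -/
def etaB (n : ℕ) (v w : Esp n) : ℝ :=
  -(v 0 * w 0) + ∑ i ∈ Finset.univ.erase (0 : Fin (n + 1)), v i * w i

/-- A curve is locally Lipschitz on `s` if it is Lipschitz on every compact subset of `s`. -/
def LocLipOn (n : ℕ) (γ : ℝ → Esp n) (s : Set ℝ) : Prop :=
  ∀ K, K ⊆ s → IsCompact K → ∃ C : NNReal, LipschitzOnWith C γ K

/-- An `η^α`-causal curve on `s`: locally Lipschitz, and for a.e. `t ∈ s` it is differentiable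
with `η^α(γ'(t)) ≤ 0` and `(γ'(t))₀ > 0`. -/
def EtaCausalOn (n : ℕ) (α : ℝ) (γ : ℝ → Esp n) (s : Set ℝ) : Prop :=
  LocLipOn n γ s ∧
    ∀ᵐ t ∂(volume.restrict s),
      DifferentiableAt ℝ γ t ∧ etaQ n α (deriv γ t) ≤ 0 ∧ 0 < deriv γ t 0

/-- An `η^α`-timelike curve on `s`: locally Lipschitz, and there is `δ > 0` such that for a.e.
`t ∈ s` it is differentiable with `η^α(γ'(t)) < -δ` and `(γ'(t))₀ > 0`. -/
def EtaTimelikeOn (n : ℕ) (α : ℝ) (γ : ℝ → Esp n) (s : Set ℝ) : Prop :=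
  LocLipOn n γ s ∧
    ∃ δ : ℝ, 0 < δ ∧
      ∀ᵐ t ∂(volume.restrict s),
        DifferentiableAt ℝ γ t ∧ etaQ n α (deriv γ t) < -δ ∧ 0 < deriv γ t 0

/-- `I⁺_{η^α}(p, U)`: endpoints of `η^α`-timelike curves in `U` starting at `p`. -/
def EtaIplus (n : ℕ) (α : ℝ) (p : Esp n) (U : Set (Esp n)) : Set (Esp n) :=
  {q | ∃ a b : ℝ, ∃ γ : ℝ → Esp n, a < b ∧ EtaTimelikeOn n α γ (Icc a b) ∧
        MapsTo γ (Icc a b) U ∧ γ a = p ∧ γ b = q}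

/-- The Euclidean cone `C⁺_ε(p,U)`. -/
def ConeP (n : ℕ) (ε : ℝ) (p : Esp n) (U : Set (Esp n)) : Set (Esp n) :=
  {q | q ∈ U ∧ q ≠ p ∧ Real.sqrt ((1 + ε) / 2) < (q - p) 0 / ‖q - p‖}

/-- `g` assigns to each point a symmetric bilinear form with continuous components on `U`. -/
def IsSymmCont (n : ℕ) (g : Esp n → Esp n →ₗ[ℝ] Esp n →ₗ[ℝ] ℝ) (U : Set (Esp n)) : Prop :=
  (∀ x ∈ U, ∀ v w : Esp n, g x v w = g x w v) ∧
    ∀ μ ν : Fin (n + 1), ContinuousOn (fun x => g x (ee n μ) (ee n ν)) U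

/-- `g` is Lorentzian on `U`: at each point it is linearly equivalent to the Minkowski form. -/
def IsLorentzian (n : ℕ) (g : Esp n → Esp n →ₗ[ℝ] Esp n →ₗ[ℝ] ℝ) (U : Set (Esp n)) : Prop :=
  ∀ x ∈ U, ∃ L : Esp n ≃ₗ[ℝ] Esp n, ∀ v w : Esp n, g x (L v) (L w) = etaB n v w

/-- `T` is a time orientation for `g` on `U`. -/
def IsTimeOrientation (n : ℕ) (g : Esp n → Esp n →ₗ[ℝ] Esp n →ₗ[ℝ] ℝ)
    (T : Esp n → Esp n) (U : Set (Esp n)) : Prop :=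
  ContinuousOn T U ∧ ∀ x ∈ U, g x (T x) (T x) < 0

/-- `X` is future-directed causal at `x` (w.r.t. the time orientation `T`). -/
def FDCausal (n : ℕ) (g : Esp n → Esp n →ₗ[ℝ] Esp n →ₗ[ℝ] ℝ) (T : Esp n → Esp n)
    (x X : Esp n) : Prop :=
  X ≠ 0 ∧ g x X X ≤ 0 ∧ g x (T x) X < 0

/-- A `g`-causal curve on `s` with values in `U`. -/
def GCausalOn (n : ℕ) (g : Esp n → Esp n →ₗ[ℝ] Esp n →ₗ[ℝ] ℝ) (T : Esp n → Esp n)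
    (U : Set (Esp n)) (γ : ℝ → Esp n) (s : Set ℝ) : Prop :=
  LocLipOn n γ s ∧ MapsTo γ s U ∧
    ∀ᵐ t ∂(volume.restrict s),
      DifferentiableAt ℝ γ t ∧ FDCausal n g T (γ t) (deriv γ t)

/-- A `g`-timelike curve on `s` with values in `U`. -/
def GTimelikeOn (n : ℕ) (g : Esp n → Esp n →ₗ[ℝ] Esp n →ₗ[ℝ] ℝ) (T : Esp n → Esp n)
    (U : Set (Esp n)) (γ : ℝ → Esp n) (s : Set ℝ) : Prop :=
  LocLipOn n γ s ∧ MapsTo γ s U ∧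
    ∃ δ : ℝ, 0 < δ ∧
      ∀ᵐ t ∂(volume.restrict s),
        DifferentiableAt ℝ γ t ∧
          g (γ t) (deriv γ t) (deriv γ t) < -δ ∧ g (γ t) (T (γ t)) (deriv γ t) < 0

/-- `I⁺_g(p,U)`: endpoints of `g`-timelike curves in `U` starting at `p`. -/
def GIplus (n : ℕ) (g : Esp n → Esp n →ₗ[ℝ] Esp n →ₗ[ℝ] ℝ) (T : Esp n → Esp n)
    (p : Esp n) (U : Set (Esp n)) : Set (Esp n) :=
  {q | ∃ a b : ℝ, ∃ γ : ℝ → Esp n, a < b ∧ GTimelikeOn n g T U γ (Icc a b) ∧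
        γ a = p ∧ γ b = q}

/-- `J⁺_g(p,U)`: `p` together with endpoints of `g`-causal curves in `U` starting at `p`. -/
def GJplus (n : ℕ) (g : Esp n → Esp n →ₗ[ℝ] Esp n →ₗ[ℝ] ℝ) (T : Esp n → Esp n)
    (p : Esp n) (U : Set (Esp n)) : Set (Esp n) :=
  insert p
    {q | ∃ a b : ℝ, ∃ γ : ℝ → Esp n, a < b ∧ GCausalOn n g T U γ (Icc a b) ∧
          γ a = p ∧ γ b = q}

/-- Lorentzian length `L_g(γ)` of a curve on `[a,b]`. -/
def Lg (n : ℕ) (g : Esp n → Esp n →ₗ[ℝ] Esp n →ₗ[ℝ] ℝ) (γ : ℝ → Esp n) (a b : ℝ) : ℝ :=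
  ∫ t in a..b, Real.sqrt (max 0 (-(g (γ t) (deriv γ t) (deriv γ t))))

/-- Euclidean length of a curve on `[a,b]`. -/
def Leuc (n : ℕ) (γ : ℝ → Esp n) (a b : ℝ) : ℝ :=
  ∫ t in a..b, ‖deriv γ t‖

/-- `η^α`-Lorentzian length of a curve on `[a,b]`. -/
def Leta (n : ℕ) (α : ℝ) (γ : ℝ → Esp n) (a b : ℝ) : ℝ :=
  ∫ t in a..b, Real.sqrt (max 0 (-(etaQ n α (deriv γ t))))

lemma rep (n : ℕ) (X : Esp n) : X = ∑ μ, X μ • ee n μ := by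
  have h := (EuclideanSpace.basisFun (Fin (n + 1)) ℝ).sum_repr X
  simp only [EuclideanSpace.basisFun_repr, EuclideanSpace.basisFun_apply] at h
  exact h.symm

noncomputable def etaBL (n : ℕ) : Esp n →ₗ[ℝ] Esp n →ₗ[ℝ] ℝ :=
  LinearMap.mk₂ ℝ (etaB n)
    (by intro x y w; simp [etaB, PiLp.add_apply, add_mul, Finset.sum_add_distrib]; ring)
    (by intro c x w; simp [etaB, PiLp.smul_apply, smul_eq_mul, mul_assoc, ← Finset.mul_sum]; ring)
    (by intro x y w; simp [etaB, PiLp.add_apply, mul_add, Finset.sum_add_distrib]; ring)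
    (by intro c x w; simp [etaB, PiLp.smul_apply, smul_eq_mul, mul_left_comm, ← Finset.mul_sum]; ring)

lemma etaBL_apply (n : ℕ) (v w : Esp n) : etaBL n v w = etaB n v w := rfl

lemma bil_expand (n : ℕ) (b : Esp n →ₗ[ℝ] Esp n →ₗ[ℝ] ℝ) (X : Esp n) :
    b X X = ∑ μ, ∑ ν, X μ * (X ν * b (ee n μ) (ee n ν)) := by
  conv_lhs => rw [rep n X]
  simp only [map_sum, _root_.map_smul, LinearMap.sum_apply, LinearMap.smul_apply, smul_eq_mul]
  rw [Finset.sum_comm]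
  simp only [Finset.mul_sum]
  exact Finset.sum_congr rfl fun i _ => Finset.sum_congr rfl fun j _ => by ring

lemma abs_apply_le (n : ℕ) (X : Esp n) (i : Fin (n + 1)) : |X i| ≤ ‖X‖ := by
  rw [EuclideanSpace.norm_eq, ← Real.sqrt_sq_eq_abs]
  apply Real.sqrt_le_sqrt
  calc X i ^ 2 = ‖X i‖ ^ 2 := by rw [Real.norm_eq_abs, sq_abs]
    _ ≤ ∑ j, ‖X j‖ ^ 2 := Finset.single_le_sum (f := fun j => ‖X j‖ ^ 2) (fun j _ => sq_nonneg _) (Finset.mem_univ i)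

lemma norm_sq_eq (n : ℕ) (X : Esp n) :
    ‖X‖ ^ 2 = X 0 ^ 2 + ∑ i ∈ Finset.univ.erase (0 : Fin (n + 1)), X i ^ 2 := by
  rw [EuclideanSpace.norm_eq, Real.sq_sqrt (by positivity)]
  rw [← Finset.add_sum_erase _ _ (Finset.mem_univ (0 : Fin (n + 1)))]
  simp [Real.norm_eq_abs, sq_abs]

lemma key_est (n : ℕ) (b : Esp n →ₗ[ℝ] Esp n →ₗ[ℝ] ℝ) (ε₀ : ℝ)
    (hb : ∀ μ ν : Fin (n + 1), |b (ee n μ) (ee n ν) - etaB n (ee n μ) (ee n ν)| < ε₀)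
    (X : Esp n) :
    |b X X - etaB n X X| ≤ (ε₀ * (n + 1) ^ 2) * ‖X‖ ^ 2 := by
  have h1 : b X X - etaB n X X = (b - etaBL n) X X := by
    simp [LinearMap.sub_apply, etaBL_apply]
  rw [h1, bil_expand]
  calc |∑ μ, ∑ ν, X μ * (X ν * (b - etaBL n) (ee n μ) (ee n ν))|
      ≤ ∑ μ, ∑ ν : Fin (n+1), |X μ * (X ν * (b - etaBL n) (ee n μ) (ee n ν))| := by
        refine (Finset.abs_sum_le_sum_abs _ _).trans ?_
        exact Finset.sum_le_sum fun μ _ => Finset.abs_sum_le_sum_abs _ _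
    _ ≤ ∑ _μ : Fin (n+1), ∑ _ν : Fin (n+1), ‖X‖ * (‖X‖ * ε₀) := by
        refine Finset.sum_le_sum fun μ _ => Finset.sum_le_sum fun ν _ => ?_
        rw [abs_mul, abs_mul]
        have h2 : |(b - etaBL n) (ee n μ) (ee n ν)| ≤ ε₀ := by
          have := hb μ ν
          simp only [LinearMap.sub_apply, etaBL_apply] at *
          linarith [abs_nonneg ((b (ee n μ)) (ee n ν) - etaB n (ee n μ) (ee n ν))]
        have := abs_apply_le n X μ
        have := abs_apply_le n X ν
        have h0 : (0:ℝ) ≤ ε₀ := le_trans (abs_nonneg _) h2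
        have h3 : |X ν| * |(b - etaBL n) (ee n μ) (ee n ν)| ≤ ‖X‖ * ε₀ :=
          mul_le_mul (abs_apply_le n X ν) h2 (abs_nonneg _) (norm_nonneg X)
        exact mul_le_mul (abs_apply_le n X μ) h3 (by positivity) (norm_nonneg X)
    _ = (ε₀ * (n + 1) ^ 2) * ‖X‖ ^ 2 := by
        simp [Finset.sum_const, Finset.card_univ]
        ring

set_option maxHeartbeats 1000000 in
/-- Quantitative pointwise form of Lemma 2.12(4). -/
theorem stmt_0 (n : ℕ) (hn : 1 ≤ n) (ε : ℝ) (hε : 0 < ε) (hε1 : ε < 1) :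
    ∃ ε₀ : ℝ, 0 < ε₀ ∧ ε₀ < ε ∧
      ∀ b : Esp n →ₗ[ℝ] Esp n →ₗ[ℝ] ℝ,
        (∀ v w : Esp n, b v w = b w v) →
        (∀ μ ν : Fin (n + 1), |b (ee n μ) (ee n ν) - etaB n (ee n μ) (ee n ν)| < ε₀) →
        ∀ X : Esp n, X ≠ 0 →
          (etaQ n ε X < 0 → b X X < etaQ n ε X ∧ b X X < 0) ∧
          (b X X ≤ 0 → etaQ n (-ε) X < 0) := by
  have hnp : (1:ℝ) ≤ (n:ℝ) := by exact_mod_cast hn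
  have h1ε : (0:ℝ) < 1 + ε := by linarith
  have hden : (0:ℝ) < ((n:ℝ)+1)^2 * (1+ε) := by positivity
  refine ⟨ε / (((n:ℝ) + 1) ^ 2 * (1 + ε)), div_pos hε hden, ?_, ?_⟩
  · apply div_lt_self hε; nlinarith
  set ε₀ := ε / (((n:ℝ) + 1) ^ 2 * (1 + ε)) with hε₀def
  have hε₀pos : 0 < ε₀ := div_pos hε hden
  intro b hsymm hb X hX
  set t := X 0 with ht
  set s := ∑ i ∈ Finset.univ.erase (0 : Fin (n+1)), X i ^ 2 with hs
  have hs0 : 0 ≤ s := Finset.sum_nonneg fun i _ => sq_nonneg _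
  have hkey := key_est n b ε₀ hb X
  have hetaB : etaB n X X = -t^2 + s := by
    simp only [etaB, hs, ht, pow_two]
  have hN : ‖X‖^2 = t^2 + s := norm_sq_eq n X
  have hNpos : 0 < ‖X‖^2 := pow_pos (norm_pos_iff.mpr hX) 2
  set d := ε₀ * ((n:ℝ)+1)^2 with hdd
  have hdpos : 0 < d := by positivity
  have hdε : d * (1+ε) = ε := by
    rw [hdd, hε₀def]; field_simp
  have hd1 : d < 1 := by nlinarith
  have hub : b X X - (-t^2 + s) ≤ d * (t^2+s) := by
    rw [← hetaB, ← hN]; exact le_trans (le_abs_self _) hkey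
  have hlb : -(d * (t^2+s)) ≤ b X X - (-t^2 + s) := by
    rw [← hetaB, ← hN]
    linarith [neg_abs_le (b X X - etaB n X X), hkey]
  clear_value t s d ε₀
  have hQ : etaQ n ε X = -((1-ε)/(1+ε)) * t^2 + s := by
    simp only [etaQ, ← hs, ← ht]
  have hQ' : etaQ n (-ε) X = -((1+ε)/(1-ε)) * t^2 + s := by
    simp only [etaQ, ← hs, ← ht, sub_neg_eq_add]
    ring_nf
  have h1me : (0:ℝ) < 1 - ε := by linarith
  have hc : (1-ε)/(1+ε) * (1+ε) = 1-ε := div_mul_cancel₀ _ (ne_of_gt h1ε)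
  have hc' : (1+ε)/(1-ε) * (1-ε) = 1+ε := div_mul_cancel₀ _ (ne_of_gt h1me)
  constructor
  · intro hne
    rw [hQ] at hne ⊢
    have ht2 : 0 < t^2 := by
      rcases lt_or_eq_of_le (sq_nonneg t) with h | h
      · exact h
      · exfalso; rw [← h] at hne; simp at hne; linarith
    have hclt : (1-ε)/(1+ε) < 1 := by
      refine lt_of_mul_lt_mul_right ?_ h1ε.le
      rw [hc]; linarith
    have hslt : s < t^2 := by nlinarith
    have hstep : d*(t^2+s) < (1 - (1-ε)/(1+ε))*t^2 := by
      refine lt_of_mul_lt_mul_right ?_ h1ε.le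
      have e1 : d*(t^2+s)*(1+ε) = ε*(t^2+s) := by linear_combination (t^2+s)*hdε
      have e2 : (1 - (1-ε)/(1+ε))*t^2*(1+ε) = 2*ε*t^2 := by
        rw [sub_mul, sub_mul, one_mul, mul_right_comm ((1-ε)/(1+ε)) (t^2) (1+ε), hc]; ring
      rw [e1, e2]
      nlinarith [mul_pos hε ht2]
    have hmain : b X X < -((1-ε)/(1+ε)) * t^2 + s := by linarith
    exact ⟨hmain, hmain.trans hne⟩
  · intro hble
    rw [hQ']
    have h0 : s - t^2 ≤ d*(t^2+s) := by linarith
    have hd1' : d < 1 := hd1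
    have ht2 : 0 < t^2 := by
      by_contra hcon
      push_neg at hcon
      have hz : t^2 = 0 := le_antisymm hcon (sq_nonneg t)
      rw [hN] at hNpos
      have hspos : 0 < s := by linarith
      have := mul_lt_mul_of_pos_right hd1 hspos
      rw [hz] at h0
      nlinarith
    have h5 : (s - t^2)*(1+ε) ≤ ε*(t^2+s) := by
      calc (s - t^2)*(1+ε) ≤ (d*(t^2+s))*(1+ε) := by
            exact mul_le_mul_of_nonneg_right h0 h1ε.le
        _ = ε*(t^2+s) := by linear_combination (t^2+s)*hdε
    have h6 : s ≤ t^2 + 2*ε*t^2 := by nlinarith [h5]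
    have h7 : 1 + 2*ε < (1+ε)/(1-ε) := by
      refine lt_of_mul_lt_mul_right ?_ h1me.le
      rw [hc']
      nlinarith [mul_pos hε hε]
    nlinarith [mul_lt_mul_of_pos_right h7 ht2]
end
end

section
/- (Lemma 2.14, left inclusions.) Let −1 < α < 1, let B ⊆ ℝ^{n+1} be an open Euclidean ball and let p ∈ B. If q ∈ C⁺_α(p,B), then the straight-line curve γ : [0,1] → B, γ(t) = (1−t)p + t q, is an η^α-timelike curve; in particular C⁺_α(p,B) ⊆ I⁺_{η^α}(p,B). -/
open MeasureTheory Set Filter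

noncomputable section

private lemma seg_hasDeriv (n : ℕ) (p q : Esp n) (t : ℝ) :
    HasDerivAt (fun t : ℝ => (1 - t) • p + t • q) (q - p) t := by
  have h1 : HasDerivAt (fun t : ℝ => (1 - t) • p) ((-1 : ℝ) • p) t :=
    ((hasDerivAt_id t).const_sub 1).smul_const p
  have h2 : HasDerivAt (fun t : ℝ => t • q) ((1 : ℝ) • q) t :=
    (hasDerivAt_id t).smul_const q
  have := h1.add h2
  rwa [show (-1 : ℝ) • p + (1 : ℝ) • q = q - p by module] at this

private lemma norm_sq_sum (n : ℕ) (v : Esp n) : ∑ i, v i ^ 2 = ‖v‖ ^ 2 := by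
  rw [EuclideanSpace.norm_eq, Real.sq_sqrt (Finset.sum_nonneg fun i _ => sq_nonneg _)]
  simp [Real.norm_eq_abs, sq_abs]

private lemma etaQ_eq' (n : ℕ) (α : ℝ) (v : Esp n) :
    etaQ n α v = -((1 - α) / (1 + α)) * v 0 ^ 2 + (‖v‖ ^ 2 - v 0 ^ 2) := by
  have h := Finset.add_sum_erase Finset.univ (fun i => v i ^ 2) (Finset.mem_univ (0 : Fin (n+1)))
  simp only at h
  rw [norm_sq_sum] at h
  unfold etaQ
  linarith [h]

private lemma key_etaQ (n : ℕ) (α : ℝ) (hα : -1 < α) (v : Esp n) (hv : v ≠ 0)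
    (h : Real.sqrt ((1 + α) / 2) < v 0 / ‖v‖) :
    etaQ n α v < 0 ∧ 0 < v 0 := by
  have hN : 0 < ‖v‖ := norm_pos_iff.mpr hv
  have h1α : (0:ℝ) < 1 + α := by linarith
  have hs : (0:ℝ) ≤ Real.sqrt ((1 + α) / 2) := Real.sqrt_nonneg _
  have hpos : 0 < v 0 / ‖v‖ := lt_of_le_of_lt hs h
  have hv0 : 0 < v 0 := by
    have := mul_pos hpos hN
    rwa [div_mul_cancel₀ _ (ne_of_gt hN)] at this
  have hsq : (1 + α) / 2 < (v 0 / ‖v‖) ^ 2 := by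
    have := mul_self_lt_mul_self hs h
    rwa [Real.mul_self_sqrt (by linarith), ← sq] at this
  have hsq' : (1 + α) / 2 * ‖v‖ ^ 2 < v 0 ^ 2 := by
    have := (mul_lt_mul_of_pos_right hsq (by positivity : (0:ℝ) < ‖v‖ ^ 2))
    rwa [div_pow, div_mul_cancel₀ _ (by positivity : (‖v‖:ℝ) ^ 2 ≠ 0)] at this
  refine ⟨?_, hv0⟩
  rw [etaQ_eq']
  have hA : (1 - α) / (1 + α) * (1 + α) = 1 - α := div_mul_cancel₀ _ (ne_of_gt h1α)
  nlinarith [hA, hsq', h1α, sq_nonneg (v 0)]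

/-- Lemma 2.14, left inclusions. -/
theorem stmt_1 (n : ℕ) (hn : 1 ≤ n) (α : ℝ) (hα : -1 < α) (hα1 : α < 1)
    (c : Esp n) (r : ℝ) (p : Esp n) (hp : p ∈ Metric.ball c r)
    (q : Esp n) (hq : q ∈ ConeP n α p (Metric.ball c r)) :
    (EtaTimelikeOn n α (fun t : ℝ => (1 - t) • p + t • q) (Icc 0 1) ∧
      MapsTo (fun t : ℝ => (1 - t) • p + t • q) (Icc 0 1) (Metric.ball c r)) ∧
    ConeP n α p (Metric.ball c r) ⊆ EtaIplus n α p (Metric.ball c r) :=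
  by
  have main : ∀ q' : Esp n, q' ∈ ConeP n α p (Metric.ball c r) →
      EtaTimelikeOn n α (fun t : ℝ => (1 - t) • p + t • q') (Icc 0 1) ∧
      MapsTo (fun t : ℝ => (1 - t) • p + t • q') (Icc 0 1) (Metric.ball c r) := by
    intro q' hq'
    obtain ⟨hqU, hqp, hcone⟩ := hq'
    have hvne : q' - p ≠ 0 := sub_ne_zero.mpr hqp
    obtain ⟨hneg, hpos0⟩ := key_etaQ n α hα (q' - p) hvne hcone
    have hder : ∀ t : ℝ, deriv (fun t : ℝ => (1 - t) • p + t • q') t = q' - p :=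
      fun t => (seg_hasDeriv n p q' t).deriv
    constructor
    · constructor
      · intro K _ _
        refine ⟨‖q' - p‖₊, ?_⟩
        have hL : LipschitzWith ‖q' - p‖₊ (fun t : ℝ => (1 - t) • p + t • q') := by
          apply LipschitzWith.of_dist_le_mul
          intro s t
          have hst : ((1 - s) • p + s • q') - ((1 - t) • p + t • q') = (s - t) • (q' - p) := by
            module
          rw [dist_eq_norm, Real.dist_eq]
          simp only [hst, norm_smul, Real.norm_eq_abs]
          rw [mul_comm, coe_nnnorm]
        exact hL.lipschitzOnWith
      · refine ⟨-(etaQ n α (q' - p)) / 2, by linarith, ?_⟩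
        refine Eventually.of_forall fun t => ?_
        refine ⟨(seg_hasDeriv n p q' t).differentiableAt, ?_, ?_⟩
        · rw [hder t]; linarith
        · rw [hder t]
          simpa using hpos0
    · intro t ht
      have := (convex_ball c r) hp hqU (by linarith [ht.2] : (0:ℝ) ≤ 1 - t)
        ht.1 (by ring)
      simpa using this
  refine ⟨main q hq, ?_⟩
  intro q' hq'
  obtain ⟨h1, h2⟩ := main q' hq'
  exact ⟨0, 1, fun t : ℝ => (1 - t) • p + t • q', one_pos, h1, h2, by simp, by simp⟩
end
end

section
/- (Lemma 2.14, right inclusions.) Let −1 < β < α < 1, let B ⊆ ℝ^{n+1} be an open Euclidean ball, let p ∈ B, and let γ : [a,b] → B be an η^α-timelike curve with γ(a) = p. Then γ(t) ∈ C⁺_β(p,B) for every t ∈ (a,b]; in particular I⁺_{η^α}(p,B) ⊆ C⁺_β(p,B). -/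
open MeasureTheory Set Filter

noncomputable section

private lemma core_mono {C : NNReal} {f : ℝ → ℝ} {a b : ℝ} (hf : LipschitzOnWith C f (Icc a b))
    {c : ℝ} (hc : 0 ≤ c)
    (hae : ∀ᵐ t ∂(volume.restrict (Icc a b)), DifferentiableAt ℝ f t ∧ c ≤ deriv f t)
    {s t : ℝ} (has : a ≤ s) (hst : s ≤ t) (htb : t ≤ b) :
    c * (t - s) ≤ f t - f s := by
  obtain ⟨g, hg, hfg⟩ := hf.extend_real
  set h : ℝ → ℝ := fun x => (C : ℝ) * x + g x with hh
  have hmono : Monotone h := by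
    intro x y hxy
    have h1 : |g x - g y| ≤ (C : ℝ) * |x - y| := by
      simpa [Real.dist_eq] using hg.dist_le_mul x y
    rw [abs_of_nonpos (by linarith : x - y ≤ 0)] at h1
    have h2 : g x - g y ≤ (C : ℝ) * -(x - y) := (le_abs_self _).trans h1
    simp only [hh]
    nlinarith
  have hhc : Continuous h := (continuous_const.mul continuous_id).add hg.continuous
  have hH : ∀ x, hmono.stieltjesFunction x = h x := by
    intro x
    rw [hmono.stieltjesFunction_eq]
    exact rightLim_eq_of_tendsto (h := nhdsGT_neBot x)
      ((hhc.tendsto x).mono_left nhdsWithin_le_nhds)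
  have hder := hmono.ae_hasDerivAt
  have hsub : Ioo s t ⊆ Ioo a b := Ioo_subset_Ioo has htb
  have hae' : ∀ᵐ x ∂(volume.restrict (Ioo s t)),
      ENNReal.ofReal ((C : ℝ) + c) ≤ Measure.rnDeriv hmono.stieltjesFunction.measure volume x := by
    have h1 : ∀ᵐ x ∂(volume.restrict (Ioo s t)), DifferentiableAt ℝ f x ∧ c ≤ deriv f x :=
      ae_mono (Measure.restrict_mono (hsub.trans Ioo_subset_Icc_self) le_rfl) hae
    have h2 : ∀ᵐ x ∂(volume.restrict (Ioo s t)),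
        HasDerivAt h (Measure.rnDeriv hmono.stieltjesFunction.measure volume x).toReal x :=
      ae_restrict_of_ae hder
    have h3 : ∀ᵐ x ∂(volume.restrict (Ioo s t)), x ∈ Ioo s t :=
      ae_restrict_mem measurableSet_Ioo
    filter_upwards [h1, h2, h3] with x hx1 hx2 hx3
    have hxab : x ∈ Ioo a b := hsub hx3
    have hfg' : f =ᶠ[nhds x] g := by
      filter_upwards [Ioo_mem_nhds hxab.1 hxab.2] with y hy
      exact hfg (Ioo_subset_Icc_self hy)
    have hdg : HasDerivAt g (deriv f x) x := hx1.1.hasDerivAt.congr_of_eventuallyEq hfg'.symm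
    have hdh : HasDerivAt h ((C : ℝ) + deriv f x) x := by
      have := ((hasDerivAt_id x).const_mul (C : ℝ)).add hdg; rw [mul_one] at this; exact this
    have heq : (Measure.rnDeriv hmono.stieltjesFunction.measure volume x).toReal
        = (C : ℝ) + deriv f x := hx2.unique hdh
    rcases eq_or_ne (Measure.rnDeriv hmono.stieltjesFunction.measure volume x) ⊤ with htop | htop
    · simp [htop]
    · rw [ENNReal.ofReal_le_iff_le_toReal htop, heq]
      linarith [hx1.2]
  have key : ENNReal.ofReal (((C : ℝ) + c) * (t - s)) ≤ ENNReal.ofReal (h t - h s) := by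
    calc ENNReal.ofReal (((C : ℝ) + c) * (t - s))
        = ENNReal.ofReal ((C : ℝ) + c) * volume (Ioo s t) := by
          rw [Real.volume_Ioo, ← ENNReal.ofReal_mul (by positivity)]
      _ = ∫⁻ _x in Ioo s t, ENNReal.ofReal ((C : ℝ) + c) ∂volume := by
          rw [setLIntegral_const]
      _ ≤ ∫⁻ x in Ioo s t, Measure.rnDeriv hmono.stieltjesFunction.measure volume x ∂volume :=
          lintegral_mono_ae hae'
      _ ≤ hmono.stieltjesFunction.measure (Ioo s t) := Measure.setLIntegral_rnDeriv_le _
      _ ≤ hmono.stieltjesFunction.measure (Ioc s t) := measure_mono Ioo_subset_Ioc_self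
      _ = ENNReal.ofReal (h t - h s) := by
          rw [StieltjesFunction.measure_Ioc, hH, hH]
  have h4 : ((C : ℝ) + c) * (t - s) ≤ h t - h s :=
    (ENNReal.ofReal_le_ofReal_iff (sub_nonneg.2 (hmono hst))).1 key
  have h5 : f s = g s := hfg ⟨has, hst.trans htb⟩
  have h6 : f t = g t := hfg ⟨has.trans hst, htb⟩
  simp only [hh] at h4
  nlinarith

private lemma ptwise {n : ℕ} {α δ : ℝ} (hα1 : -1 < α) (hα : α < 1) (hδ : 0 < δ) {X : Esp n}
    (h1 : etaQ n α X < -δ) (h2 : 0 < X 0) :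
    Real.sqrt (δ * (1 + α) / (1 - α)) ≤ X 0 ∧ Real.sqrt ((1 + α) / 2) * ‖X‖ ≤ X 0 := by
  have ha1 : (0:ℝ) < 1 + α := by linarith
  have ha2 : (0:ℝ) < 1 - α := by linarith
  have hS : 0 ≤ ∑ i ∈ Finset.univ.erase (0 : Fin (n + 1)), X i ^ 2 :=
    Finset.sum_nonneg fun i _ => sq_nonneg _
  have hkey : δ + ∑ i ∈ Finset.univ.erase (0 : Fin (n + 1)), X i ^ 2
      ≤ (1 - α) / (1 + α) * X 0 ^ 2 := by
    unfold etaQ at h1; linarith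
  have hn2 : ‖X‖ ^ 2 = X 0 ^ 2 + ∑ i ∈ Finset.univ.erase (0 : Fin (n + 1)), X i ^ 2 := by
    rw [EuclideanSpace.norm_eq, Real.sq_sqrt (by positivity)]
    rw [← Finset.sum_erase_add _ _ (Finset.mem_univ (0 : Fin (n + 1)))]
    simp [sq_abs]
  constructor
  · have h3 : δ * (1 + α) / (1 - α) ≤ X 0 ^ 2 := by
      rw [div_le_iff₀ ha2]
      have := hkey
      rw [div_mul_eq_mul_div, le_div_iff₀ ha1] at this
      nlinarith
    calc Real.sqrt (δ * (1 + α) / (1 - α)) ≤ Real.sqrt (X 0 ^ 2) := Real.sqrt_le_sqrt h3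
      _ = X 0 := by rw [Real.sqrt_sq h2.le]
  · have h4 : (1 + α) / 2 * ‖X‖ ^ 2 ≤ X 0 ^ 2 := by
      have h5 : ∑ i ∈ Finset.univ.erase (0 : Fin (n + 1)), X i ^ 2
          ≤ (1 - α) / (1 + α) * X 0 ^ 2 := by linarith
      rw [hn2]
      rw [div_mul_eq_mul_div, le_div_iff₀ ha1] at h5
      nlinarith
    have h6 : Real.sqrt ((1 + α) / 2) * ‖X‖ = Real.sqrt ((1 + α) / 2 * ‖X‖ ^ 2) := by
      rw [Real.sqrt_mul (by positivity), Real.sqrt_sq (norm_nonneg _)]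
    rw [h6]
    calc Real.sqrt ((1 + α) / 2 * ‖X‖ ^ 2) ≤ Real.sqrt (X 0 ^ 2) := Real.sqrt_le_sqrt h4
      _ = X 0 := by rw [Real.sqrt_sq h2.le]

private lemma cone_aux (n : ℕ) (α β : ℝ) (hβ : -1 < β) (hβα : β < α) (hα : α < 1)
    (U : Set (Esp n)) (p : Esp n) (a b : ℝ) (γ : ℝ → Esp n)
    (hγ : EtaTimelikeOn n α γ (Icc a b))
    (hmaps : MapsTo γ (Icc a b) U)
    (hpa : γ a = p) :
    ∀ t ∈ Ioc a b, γ t ∈ ConeP n β p U := by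
  have hα1 : -1 < α := hβ.trans hβα
  obtain ⟨hlip, δ, hδ, hae⟩ := hγ
  obtain ⟨C, hC⟩ := hlip (Icc a b) Subset.rfl isCompact_Icc
  set k := Real.sqrt ((1 + α) / 2) with hk
  have hk0 : 0 < k := Real.sqrt_pos.2 (by linarith)
  set c₀ := Real.sqrt (δ * (1 + α) / (1 - α)) with hc₀
  have hc₀0 : 0 < c₀ :=
    Real.sqrt_pos.2 (div_pos (mul_pos hδ (by linarith)) (by linarith))
  have hgen : ∀ (L : Esp n →L[ℝ] ℝ) (c : ℝ), 0 ≤ c →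
      (∀ X : Esp n, etaQ n α X < -δ → 0 < X 0 → c ≤ L X) →
      ∀ t ∈ Ioc a b, c * (t - a) ≤ L (γ t) - L (γ a) := by
    intro L c hc hX t ht
    have hlip' : LipschitzOnWith (‖L‖₊ * C) (fun s => L (γ s)) (Icc a b) :=
      L.lipschitz.comp_lipschitzOnWith hC
    have hae' : ∀ᵐ s ∂(volume.restrict (Icc a b)),
        DifferentiableAt ℝ (fun s => L (γ s)) s ∧ c ≤ deriv (fun s => L (γ s)) s := by
      filter_upwards [hae] with s hs
      have hd : HasDerivAt (fun s => L (γ s)) (L (deriv γ s)) s :=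
        L.hasFDerivAt.comp_hasDerivAt s hs.1.hasDerivAt
      refine ⟨hd.differentiableAt, ?_⟩
      rw [hd.deriv]
      exact hX _ hs.2.1 hs.2.2
    exact core_mono hlip' hc hae' le_rfl ht.1.le ht.2
  intro t ht
  have htIcc : t ∈ Icc a b := ⟨ht.1.le, ht.2⟩
  have h1 : c₀ * (t - a) ≤ γ t 0 - γ a 0 :=
    hgen (EuclideanSpace.proj (0 : Fin (n+1))) c₀ hc₀0.le
      (fun X hX1 hX2 => (ptwise hα1 hα hδ hX1 hX2).1) t ht
  set v : Esp n := γ t - p with hv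
  have hvapp : v 0 = γ t 0 - γ a 0 := by rw [hv, ← hpa]; rfl
  have hv0 : 0 < v 0 := by
    rw [hvapp]
    have h0 : 0 < c₀ * (t - a) := mul_pos hc₀0 (by linarith [ht.1])
    linarith
  have hvne : v ≠ 0 := by
    intro h
    rw [h] at hv0
    simp at hv0
  have hnv : 0 < ‖v‖ := norm_pos_iff.2 hvne
  set u : Esp n := ‖v‖⁻¹ • v with hu
  have hnu : ‖u‖ = 1 := by
    rw [hu, norm_smul, norm_inv, norm_norm, inv_mul_cancel₀ hnv.ne']
  set M : Esp n →L[ℝ] ℝ := k⁻¹ • (EuclideanSpace.proj (0 : Fin (n+1))) - innerSL ℝ u with hM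
  have hMapp : ∀ X : Esp n, M X = k⁻¹ * X 0 - inner ℝ u X := by
    intro X
    simp [hM]
  have h2 := hgen M 0 le_rfl (by
    intro X hX1 hX2
    rw [hMapp]
    have hcs : (inner ℝ u X : ℝ) ≤ ‖X‖ := by
      calc (inner ℝ u X : ℝ) ≤ ‖u‖ * ‖X‖ := real_inner_le_norm u X
        _ = ‖X‖ := by rw [hnu, one_mul]
    have hb := (ptwise hα1 hα hδ hX1 hX2).2
    rw [← hk] at hb
    have hX3 : ‖X‖ ≤ k⁻¹ * X 0 := by
      rw [le_inv_mul_iff₀ hk0]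
      linarith
    linarith) t ht
  have hinner : (inner ℝ u (γ t) : ℝ) - inner ℝ u (γ a) = ‖v‖ := by
    rw [← inner_sub_right]
    have hsub : γ t - γ a = v := by rw [hv, hpa]
    rw [hsub, hu, real_inner_smul_left, real_inner_self_eq_norm_sq, sq,
      ← mul_assoc, inv_mul_cancel₀ hnv.ne', one_mul]
  have h3 : 0 ≤ k⁻¹ * (v 0) - ‖v‖ := by
    have := h2
    rw [hMapp, hMapp, hvapp] at *
    nlinarith [hinner]
  have hkv : k * ‖v‖ ≤ v 0 := by
    rw [← le_inv_mul_iff₀ hk0]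
    linarith
  refine ⟨hmaps htIcc, sub_ne_zero.mp hvne, ?_⟩
  rw [← hv]
  have hfrac : k ≤ v 0 / ‖v‖ := (le_div_iff₀ hnv).2 hkv
  refine lt_of_lt_of_le ?_ hfrac
  rw [hk]
  exact Real.sqrt_lt_sqrt (by linarith) (by linarith)

/-- Lemma 2.14, right inclusions. -/
theorem stmt_2 (n : ℕ) (hn : 1 ≤ n) (α β : ℝ) (hβ : -1 < β) (hβα : β < α) (hα : α < 1)
    (c : Esp n) (r : ℝ) (p : Esp n) (hp : p ∈ Metric.ball c r)
    (a b : ℝ) (hab : a < b) (γ : ℝ → Esp n)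
    (hγ : EtaTimelikeOn n α γ (Icc a b))
    (hmaps : MapsTo γ (Icc a b) (Metric.ball c r))
    (hpa : γ a = p) :
    (∀ t ∈ Ioc a b, γ t ∈ ConeP n β p (Metric.ball c r)) ∧
    EtaIplus n α p (Metric.ball c r) ⊆ ConeP n β p (Metric.ball c r) := by
  refine ⟨cone_aux n α β hβ hβα hα (Metric.ball c r) p a b γ hγ hmaps hpa, ?_⟩
  rintro q ⟨a₁, b₁, γ₁, hab₁, hγ₁, hmaps₁, hpa₁, hqb₁⟩
  have h := cone_aux n α β hβ hβα hα (Metric.ball c r) p a₁ b₁ γ₁ hγ₁ hmaps₁ hpa₁ b₁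
    ⟨hab₁, le_rfl⟩
  rwa [hqb₁] at h
end
end

section
/- (Proposition 2.20, chart version: causal curves near a point have small Euclidean length.) Let U, g, T be as in the context, with g Lorentzian and T a time orientation. Then for every p ∈ U and every ε > 0 there is an open set V with p ∈ V ⊆ U such that every g-causal curve γ : [a,b] → V satisfies ∫_a^b ‖γ'(t)‖ dt < ε. -/
open MeasureTheory Set Filter
open Topology
open scoped Interval

noncomputable section

/- ### Auxiliary lemmas ### -/

lemma esp_decomp (n : ℕ) (v : Esp n) : ∑ μ, v μ • ee n μ = v := by
  have h := (EuclideanSpace.basisFun (Fin (n + 1)) ℝ).sum_repr v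
  simpa [EuclideanSpace.basisFun_apply, EuclideanSpace.basisFun_repr, ee] using h

lemma bilin_expand (n : ℕ) (B : Esp n →ₗ[ℝ] Esp n →ₗ[ℝ] ℝ) (v w : Esp n) :
    B v w = ∑ μ, ∑ ν, v μ * (w ν * B (ee n μ) (ee n ν)) := by
  conv_lhs => rw [← esp_decomp n v, ← esp_decomp n w]
  simp only [map_sum, _root_.map_smul, LinearMap.coe_sum, Finset.sum_apply,
    LinearMap.smul_apply, smul_eq_mul, Finset.mul_sum]
  rw [Finset.sum_comm]
  exact Finset.sum_congr rfl fun μ _ => Finset.sum_congr rfl fun ν _ => by ring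

lemma cont_coord (n : ℕ) (μ : Fin (n + 1)) : Continuous (fun v : Esp n => v μ) :=
  (continuous_apply μ).comp (PiLp.continuous_ofLp ..)

lemma etaB_pair_ne (n : ℕ) (t v : Esp n) (ht : etaB n t t < 0) (hv : etaB n v v ≤ 0)
    (hv0 : v ≠ 0) : etaB n t v ≠ 0 := by
  set S := Finset.univ.erase (0 : Fin (n + 1)) with hS
  have hA : ∑ i ∈ S, t i * t i = ∑ i ∈ S, t i ^ 2 :=
    Finset.sum_congr rfl fun i _ => by ring
  have hB : ∑ i ∈ S, v i * v i = ∑ i ∈ S, v i ^ 2 :=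
    Finset.sum_congr rfl fun i _ => by ring
  have h1 : ∑ i ∈ S, t i ^ 2 < t 0 ^ 2 := by
    have := ht; rw [etaB, ← hS, hA] at this; nlinarith [this]
  have h2 : ∑ i ∈ S, v i ^ 2 ≤ v 0 ^ 2 := by
    have := hv; rw [etaB, ← hS, hB] at this; nlinarith [this]
  have hvz : v 0 ≠ 0 := by
    intro h0
    apply hv0
    have hBz : ∑ i ∈ S, v i ^ 2 = 0 := by
      have hnn : 0 ≤ ∑ i ∈ S, v i ^ 2 := Finset.sum_nonneg fun i _ => sq_nonneg _
      nlinarith [h2, h0]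
    have hall : ∀ i ∈ S, v i ^ 2 = 0 :=
      (Finset.sum_eq_zero_iff_of_nonneg fun i _ => sq_nonneg _).1 hBz
    ext i
    by_cases hi : i = 0
    · rw [hi]; simpa using h0
    · have := hall i (Finset.mem_erase.2 ⟨hi, Finset.mem_univ _⟩)
      simpa using pow_eq_zero_iff (n := 2) (by norm_num) |>.1 this
  have hv2 : 0 < v 0 ^ 2 := by positivity
  have hcs : (∑ i ∈ S, t i * v i) ^ 2 ≤ (∑ i ∈ S, t i ^ 2) * ∑ i ∈ S, v i ^ 2 :=
    Finset.sum_mul_sq_le_sq_mul_sq S t v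
  have hAnn : 0 ≤ ∑ i ∈ S, t i ^ 2 := Finset.sum_nonneg fun i _ => sq_nonneg _
  intro hzero
  rw [etaB, ← hS] at hzero
  have hsum : ∑ i ∈ S, t i * v i = t 0 * v 0 := by linarith
  rw [hsum] at hcs
  have e2 : (∑ i ∈ S, t i ^ 2) * ∑ i ∈ S, v i ^ 2 ≤ (∑ i ∈ S, t i ^ 2) * v 0 ^ 2 :=
    mul_le_mul_of_nonneg_left h2 hAnn
  have e3 : (∑ i ∈ S, t i ^ 2) * v 0 ^ 2 < t 0 ^ 2 * v 0 ^ 2 :=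
    mul_lt_mul_of_pos_right h1 hv2
  nlinarith [hcs, e2, e3]

lemma contOn_eval (n : ℕ) (g : Esp n → Esp n →ₗ[ℝ] Esp n →ₗ[ℝ] ℝ) (U : Set (Esp n))
    (hg : ∀ μ ν, ContinuousOn (fun x => g x (ee n μ) (ee n ν)) U)
    {α : Type*} [TopologicalSpace α] {s : Set α} {x v w : α → Esp n}
    (hx : ContinuousOn x s) (hxU : MapsTo x s U)
    (hv : ContinuousOn v s) (hw : ContinuousOn w s) :
    ContinuousOn (fun a => g (x a) (v a) (w a)) s := by
  have hrw : (fun a => g (x a) (v a) (w a)) =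
      fun a => ∑ μ, ∑ ν, v a μ * (w a ν * g (x a) (ee n μ) (ee n ν)) := by
    funext a; exact bilin_expand n (g (x a)) (v a) (w a)
  rw [hrw]
  refine continuousOn_finset_sum _ fun μ _ => continuousOn_finset_sum _ fun ν _ => ?_
  exact ((cont_coord n μ).comp_continuousOn hv).mul
    (((cont_coord n ν).comp_continuousOn hw).mul ((hg μ ν).comp hx hxU))

lemma cont_bilin_pt (n : ℕ) (gp : Esp n →ₗ[ℝ] Esp n →ₗ[ℝ] ℝ)
    {α : Type*} [TopologicalSpace α] {v w : α → Esp n}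
    (hv : Continuous v) (hw : Continuous w) :
    Continuous (fun a => gp (v a) (w a)) := by
  have hrw : (fun a => gp (v a) (w a)) =
      fun a => ∑ μ, ∑ ν, v a μ * (w a ν * gp (ee n μ) (ee n ν)) := by
    funext a; exact bilin_expand n gp (v a) (w a)
  rw [hrw]
  refine continuous_finset_sum _ fun μ _ => continuous_finset_sum _ fun ν _ => ?_
  exact ((cont_coord n μ).comp hv).mul (((cont_coord n ν).comp hw).mul continuous_const)

lemma pair_neg (n : ℕ) (gp : Esp n →ₗ[ℝ] Esp n →ₗ[ℝ] ℝ) (L : Esp n ≃ₗ[ℝ] Esp n)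
    (hL : ∀ v w : Esp n, gp (L v) (L w) = etaB n v w) (Tp X : Esp n)
    (hTp : gp Tp Tp < 0) (hX : gp X X ≤ 0) (hX0 : X ≠ 0) (hs : gp Tp X ≤ 0) :
    gp Tp X < 0 := by
  set t := L.symm Tp with ht
  set v := L.symm X with hv
  have e1 : gp Tp X = etaB n t v := by
    rw [← hL t v, ht, hv, LinearEquiv.apply_symm_apply, LinearEquiv.apply_symm_apply]
  have e2 : etaB n t t < 0 := by
    rw [← hL t t, ht, LinearEquiv.apply_symm_apply]; exact hTp
  have e3 : etaB n v v ≤ 0 := by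
    rw [← hL v v, hv, LinearEquiv.apply_symm_apply]; exact hX
  have hv0 : v ≠ 0 := by
    intro h
    apply hX0
    have : X = L v := (L.apply_symm_apply X).symm
    rw [this, h, map_zero]
  have := etaB_pair_ne n t v e2 e3 hv0
  rw [e1]
  rcases lt_or_eq_of_le (e1 ▸ hs) with h | h
  · exact h
  · exact absurd h this

lemma uniform_cone (n : ℕ) (U : Set (Esp n)) (hU : IsOpen U)
    (g : Esp n → Esp n →ₗ[ℝ] Esp n →ₗ[ℝ] ℝ) (hg : IsSymmCont n g U)
    (hlor : IsLorentzian n g U)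
    (T : Esp n → Esp n) (hT : IsTimeOrientation n g T U) (p : Esp n) (hp : p ∈ U) :
    ∃ r c : ℝ, 0 < r ∧ 0 < c ∧ Metric.closedBall p r ⊆ U ∧
      ∀ x ∈ Metric.closedBall p r, ∀ X : Esp n, g x X X ≤ 0 → g x (T x) X < 0 →
        c * ‖X‖ ≤ -(g p (T p) X) := by
  obtain ⟨hTcont, hTtime⟩ := hT
  have hpT : g p (T p) (T p) < 0 := hTtime p hp
  set K : Set (Esp n) := {X | ‖X‖ = 1 ∧ g p X X ≤ 0 ∧ g p (T p) X ≤ 0} with hK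
  have hc1 : Continuous (fun X : Esp n => g p X X) :=
    cont_bilin_pt n (g p) continuous_id continuous_id
  have hc2 : Continuous (fun X : Esp n => g p (T p) X) :=
    cont_bilin_pt n (g p) continuous_const continuous_id
  have hKsub : K ⊆ Metric.sphere (0 : Esp n) 1 := fun X hX => by
    simpa [mem_sphere_zero_iff_norm] using hX.1
  have hKclosed : IsClosed K := by
    have : K = {X : Esp n | ‖X‖ = 1} ∩ ({X | g p X X ≤ 0} ∩ {X | g p (T p) X ≤ 0}) := by
      ext X; simp [hK, mem_setOf_eq, and_assoc]
    rw [this]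
    exact (isClosed_eq continuous_norm continuous_const).inter
      ((isClosed_le hc1 continuous_const).inter (isClosed_le hc2 continuous_const))
  have hKcomp : IsCompact K := (isCompact_sphere 0 1).of_isClosed_subset hKclosed hKsub
  have hTp0 : T p ≠ 0 := by
    intro h; rw [h] at hpT; simp at hpT
  have hKne : K.Nonempty := by
    refine ⟨‖T p‖⁻¹ • T p, ?_, ?_, ?_⟩
    · rw [norm_smul, norm_inv, norm_norm, inv_mul_cancel₀ (norm_ne_zero_iff.2 hTp0)]
    · simp only [_root_.map_smul, LinearMap.smul_apply, smul_eq_mul]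
      have h0 : (0:ℝ) ≤ ‖T p‖⁻¹ := by positivity
      nlinarith [mul_nonpos_of_nonneg_of_nonpos (mul_nonneg h0 h0) hpT.le]
    · simp only [_root_.map_smul, smul_eq_mul]
      have h0 : (0:ℝ) ≤ ‖T p‖⁻¹ := by positivity
      nlinarith [mul_nonpos_of_nonneg_of_nonpos h0 hpT.le]
  obtain ⟨X₀, hX₀K, hmax⟩ := hKcomp.exists_isMaxOn hKne hc2.continuousOn
  set m : ℝ := g p (T p) X₀ with hm
  have hmneg : m < 0 := by
    obtain ⟨L, hL⟩ := hlor p hp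
    exact pair_neg n (g p) L hL (T p) X₀ hpT hX₀K.2.1
      (norm_ne_zero_iff.1 (by rw [hX₀K.1]; norm_num)) hX₀K.2.2
  -- key uniform claim
  have key : ∃ r : ℝ, 0 < r ∧ Metric.closedBall p r ⊆ U ∧
      ∀ x ∈ Metric.closedBall p r, ∀ X : Esp n, ‖X‖ = 1 → g x X X ≤ 0 →
        g x (T x) X ≤ 0 → g p (T p) X ≤ m / 2 := by
    by_contra hcon
    push_neg at hcon
    obtain ⟨ρ, hρ, hρU⟩ : ∃ ρ : ℝ, 0 < ρ ∧ Metric.ball p ρ ⊆ U := Metric.isOpen_iff.1 hU p hp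
    have hr₀U : Metric.closedBall p (ρ/2) ⊆ U :=
      (Metric.closedBall_subset_ball (by linarith)).trans hρU
    have H : ∀ k : ℕ, ∃ x ∈ Metric.closedBall p (min (ρ/2) (1/(k+1))),
        ∃ X : Esp n, ‖X‖ = 1 ∧ g x X X ≤ 0 ∧ g x (T x) X ≤ 0 ∧ m / 2 < g p (T p) X := by
      intro k
      have hrk : (0:ℝ) < min (ρ/2) (1/(k+1)) := by positivity
      have hsub : Metric.closedBall p (min (ρ/2) (1/(k+1))) ⊆ U :=
        (Metric.closedBall_subset_closedBall (min_le_left _ _)).trans hr₀U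
      exact hcon _ hrk hsub
    choose x hx X hX1 hX2 hX3 hX4 using H
    have hXs : ∀ k, X k ∈ Metric.sphere (0 : Esp n) 1 := fun k =>
      (mem_sphere_zero_iff_norm).2 (hX1 k)
    obtain ⟨Y, hYs, φ, hφ, hYconv⟩ := (isCompact_sphere (0:Esp n) 1).tendsto_subseq hXs
    have hxU : ∀ k, x k ∈ U := fun k =>
      ((Metric.closedBall_subset_closedBall (min_le_left _ _)).trans hr₀U) (hx k)
    have hxp : Tendsto (fun k => x (φ k)) atTop (𝓝 p) := by
      rw [tendsto_iff_dist_tendsto_zero]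
      refine squeeze_zero (fun k => dist_nonneg) (fun k => ?_)
        tendsto_one_div_add_atTop_nhds_zero_nat
      calc dist (x (φ k)) p ≤ min (ρ/2) (1/(φ k + 1)) := (Metric.mem_closedBall).1 (hx (φ k))
        _ ≤ 1/(φ k + 1) := min_le_right _ _
        _ ≤ 1/(k + 1) := by
            apply one_div_le_one_div_of_le (by positivity)
            have hk : (k:ℝ) ≤ φ k := Nat.cast_le.2 hφ.le_apply
            linarith
    -- pair sequence tendsto within U ×ˢ univ
    have hpair : Tendsto (fun k => ((x (φ k), X (φ k)) : Esp n × Esp n)) atTop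
        (𝓝[U ×ˢ (univ : Set (Esp n))] (p, Y)) := by
      rw [tendsto_nhdsWithin_iff]
      exact ⟨hxp.prodMk_nhds hYconv, Eventually.of_forall fun k => ⟨hxU (φ k), mem_univ _⟩⟩
    have hmemPY : (p, Y) ∈ U ×ˢ (univ : Set (Esp n)) := ⟨hp, mem_univ _⟩
    -- limit (1)
    have hF1 : ContinuousOn (fun q : Esp n × Esp n => g q.1 q.2 q.2) (U ×ˢ univ) :=
      contOn_eval n g U hg.2 continuousOn_fst (fun q hq => hq.1)
        continuousOn_snd continuousOn_snd
    have lim1 : g p Y Y ≤ 0 := by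
      have := ((hF1 (p, Y) hmemPY).tendsto).comp hpair
      exact le_of_tendsto this (Eventually.of_forall fun k => hX2 (φ k))
    have hF2 : ContinuousOn (fun q : Esp n × Esp n => g q.1 (T q.1) q.2) (U ×ˢ univ) :=
      contOn_eval n g U hg.2 continuousOn_fst (fun q hq => hq.1)
        (hTcont.comp continuousOn_fst (fun q hq => hq.1)) continuousOn_snd
    have lim2 : g p (T p) Y ≤ 0 := by
      have := ((hF2 (p, Y) hmemPY).tendsto).comp hpair
      exact le_of_tendsto this (Eventually.of_forall fun k => hX3 (φ k))
    have lim3 : m / 2 ≤ g p (T p) Y := by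
      have := (hc2.tendsto Y).comp hYconv
      exact ge_of_tendsto this (Eventually.of_forall fun k => (hX4 (φ k)).le)
    have hYK : Y ∈ K := ⟨mem_sphere_zero_iff_norm.1 hYs, lim1, lim2⟩
    have := hmax hYK
    simp only [mem_setOf_eq, ← hm] at this
    linarith
  obtain ⟨r, hr, hrU, hkey⟩ := key
  refine ⟨r, -m/2, hr, by linarith, hrU, ?_⟩
  intro x hxball X hXX hTX
  by_cases hX0 : X = 0
  · simp [hX0]
  · have hXn : (0:ℝ) < ‖X‖ := norm_pos_iff.2 hX0
    have h1 : ‖(‖X‖⁻¹ • X : Esp n)‖ = 1 := by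
      rw [norm_smul, norm_inv, norm_norm, inv_mul_cancel₀ hXn.ne']
    have h2 : g x (‖X‖⁻¹ • X) (‖X‖⁻¹ • X) ≤ 0 := by
      simp only [_root_.map_smul, LinearMap.smul_apply, smul_eq_mul]
      have h0 : (0:ℝ) ≤ ‖X‖⁻¹ := by positivity
      nlinarith [mul_nonpos_of_nonneg_of_nonpos (mul_nonneg h0 h0) hXX]
    have h3 : g x (T x) (‖X‖⁻¹ • X) ≤ 0 := by
      simp only [_root_.map_smul, smul_eq_mul]
      have h0 : (0:ℝ) ≤ ‖X‖⁻¹ := by positivity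
      nlinarith [mul_nonpos_of_nonneg_of_nonpos h0 hTX.le]
    have := hkey x hxball _ h1 h2 h3
    simp only [_root_.map_smul, smul_eq_mul] at this
    rw [inv_mul_le_iff₀ hXn] at this
    linarith [this]

lemma norm_deriv_le_of_lipOn {E : Type*} [NormedAddCommGroup E] [NormedSpace ℝ E]
    {γ : ℝ → E} {C : NNReal} {s : Set ℝ} (hγ : LipschitzOnWith C γ s) {t : ℝ}
    (ht : s ∈ 𝓝 t) : ‖deriv γ t‖ ≤ C := by
  by_cases hd : DifferentiableAt ℝ γ t
  · have h1 : Tendsto (slope γ t) (𝓝[≠] t) (𝓝 (deriv γ t)) :=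
      hasDerivAt_iff_tendsto_slope.1 hd.hasDerivAt
    have h2 : Tendsto (fun u => ‖slope γ t u‖) (𝓝[≠] t) (𝓝 ‖deriv γ t‖) := h1.norm
    refine le_of_tendsto h2 ?_
    have hts : t ∈ s := mem_of_mem_nhds ht
    filter_upwards [nhdsWithin_le_nhds ht, self_mem_nhdsWithin] with u hu hut
    have hut' : u ≠ t := hut
    have hd' : dist (γ u) (γ t) ≤ C * dist u t := hγ.dist_le_mul u hu t hts
    rw [slope, vsub_eq_sub, norm_smul, norm_inv]
    rw [dist_eq_norm] at hd'
    have h3 : (0:ℝ) < ‖u - t‖ := by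
      rw [norm_pos_iff]; exact sub_ne_zero.2 hut'
    rw [inv_mul_le_iff₀ h3]
    calc ‖γ u - γ t‖ ≤ C * dist u t := hd'
      _ = ‖u - t‖ * C := by rw [dist_eq_norm]; ring
  · simp [deriv_zero_of_not_differentiableAt hd]

lemma ftc_lip {C : NNReal} {f : ℝ → ℝ} (hf : LipschitzWith C f) (a b : ℝ) (hab : a ≤ b) :
    ∫ t in a..b, deriv f t = f b - f a := by
  have hcont : Continuous f := hf.continuous
  have hdiff : ∀ᵐ t, DifferentiableAt ℝ f t :=
    (hf.locallyBoundedVariationOn univ).ae_differentiableAt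
  set h : ℕ → ℝ := fun k => (1:ℝ)/(k+1) with hh
  have hhpos : ∀ k, 0 < h k := fun k => by positivity
  have hh0 : Tendsto h atTop (𝓝 0) := tendsto_one_div_add_atTop_nhds_zero_nat
  set G : ℕ → ℝ → ℝ := fun k t => (f (t + h k) - f t) / h k with hG
  -- dominated convergence
  have hGmeas : ∀ k : ℕ, AEStronglyMeasurable (G k) (volume.restrict (Ι a b)) := by
    intro k
    exact (((hcont.comp (continuous_id.add continuous_const)).sub hcont).div_const _
      ).aestronglyMeasurable
  have hGbound : ∀ k : ℕ, ∀ᵐ x : ℝ, x ∈ Ι a b → ‖G k x‖ ≤ (C : ℝ) := by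
    intro k
    refine Eventually.of_forall fun x _ => ?_
    have := hf.dist_le_mul (x + h k) x
    rw [Real.dist_eq, Real.dist_eq] at this
    have h1 : |x + h k - x| = h k := by
      rw [add_sub_cancel_left, abs_of_pos (hhpos k)]
    rw [h1] at this
    rw [hG, Real.norm_eq_abs, abs_div, abs_of_pos (hhpos k), div_le_iff₀ (hhpos k)]
    exact this
  have hGlim : ∀ᵐ x : ℝ, x ∈ Ι a b → Tendsto (fun k => G k x) atTop (𝓝 (deriv f x)) := by
    filter_upwards [hdiff] with t ht _
    have hslope : Tendsto (slope f t) (𝓝[≠] t) (𝓝 (deriv f t)) :=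
      hasDerivAt_iff_tendsto_slope.1 ht.hasDerivAt
    have hseq : Tendsto (fun k => t + h k) atTop (𝓝[≠] t) := by
      refine tendsto_nhdsWithin_of_tendsto_nhds_of_eventually_within _ ?_ ?_
      · simpa using tendsto_const_nhds.add hh0
      · exact Eventually.of_forall fun k => by
          simp [mem_compl_singleton_iff, (hhpos k).ne']
    have := hslope.comp hseq
    refine this.congr fun k => ?_
    rw [Function.comp_apply, slope_def_field, add_sub_cancel_left]
  have hderint : IntervalIntegrable (deriv f) volume a b := by
    refine ⟨?_, ?_⟩ <;>
    · refine Integrable.mono' (integrable_const (C : ℝ))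
        (measurable_deriv f).aestronglyMeasurable (Eventually.of_forall fun t => ?_)
      exact norm_deriv_le_of_lipOn (hf.lipschitzOnWith (s := univ)) univ_mem
  have hDCT : Tendsto (fun k => ∫ t in a..b, G k t) atTop (𝓝 (∫ t in a..b, deriv f t)) := by
    refine intervalIntegral.tendsto_integral_filter_of_dominated_convergence (fun _ => (C : ℝ))
      (Eventually.of_forall hGmeas) (Eventually.of_forall hGbound) ?_ hGlim
    exact intervalIntegrable_const
  -- explicit computation of the integrals
  set F : ℝ → ℝ := fun u => ∫ t in a..u, f t with hF
  have hFder : ∀ u : ℝ, HasDerivAt F (f u) u := fun u =>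
    intervalIntegral.integral_hasDerivAt_right (hcont.intervalIntegrable _ _)
      (hcont.stronglyMeasurableAtFilter _ _) hcont.continuousAt
  have hcomp : ∀ k : ℕ, ∫ t in a..b, G k t =
      (F (b + h k) - F b) / h k - (F (a + h k) - F a) / h k := by
    intro k
    have hint1 : IntervalIntegrable (fun t => f (t + h k)) volume a b :=
      (hcont.comp (continuous_id.add continuous_const)).intervalIntegrable _ _
    have hint2 : IntervalIntegrable f volume a b := hcont.intervalIntegrable _ _
    have e1 : ∫ t in a..b, G k t =
        ((∫ t in a..b, f (t + h k)) - ∫ t in a..b, f t) / h k := by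
      rw [hG]
      rw [← intervalIntegral.integral_sub hint1 hint2, ← intervalIntegral.integral_div]
    have e2 : ∫ t in a..b, f (t + h k) = ∫ t in (a + h k)..(b + h k), f t :=
      intervalIntegral.integral_comp_add_right f (h k)
    have e3 : ∫ t in (a + h k)..(b + h k), f t = F (b + h k) - F (a + h k) := by
      have i1 : IntervalIntegrable f volume a (a + h k) := hcont.intervalIntegrable _ _
      have i2 : IntervalIntegrable f volume (a + h k) (b + h k) := hcont.intervalIntegrable _ _
      have := intervalIntegral.integral_add_adjacent_intervals i1 i2
      rw [hF]; simp only []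
      linarith [this]
    have hFa : F a = 0 := intervalIntegral.integral_same
    have hFb : F b = ∫ t in a..b, f t := rfl
    rw [e1, e2, e3, ← hFb, hFa]
    ring
  have hslopeF : ∀ u : ℝ, Tendsto (fun k => (F (u + h k) - F u) / h k) atTop (𝓝 (f u)) := by
    intro u
    have hs : Tendsto (slope F u) (𝓝[≠] u) (𝓝 (f u)) :=
      hasDerivAt_iff_tendsto_slope.1 (hFder u)
    have hseq : Tendsto (fun k => u + h k) atTop (𝓝[≠] u) := by
      refine tendsto_nhdsWithin_of_tendsto_nhds_of_eventually_within _ ?_ ?_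
      · simpa using tendsto_const_nhds.add hh0
      · exact Eventually.of_forall fun k => by
          simp [mem_compl_singleton_iff, (hhpos k).ne']
    have := hs.comp hseq
    refine this.congr fun k => ?_
    rw [Function.comp_apply, slope_def_field, add_sub_cancel_left]
  have hlim2 : Tendsto (fun k => ∫ t in a..b, G k t) atTop (𝓝 (f b - f a)) := by
    have := (hslopeF b).sub (hslopeF a)
    refine this.congr fun k => (hcomp k).symm
  exact tendsto_nhds_unique hDCT hlim2

/-- Proposition 2.20, chart version: causal curves near a point have small Euclidean length. -/
theorem stmt_5 (n : ℕ) (hn : 1 ≤ n) (U : Set (Esp n)) (hU : IsOpen U)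
    (g : Esp n → Esp n →ₗ[ℝ] Esp n →ₗ[ℝ] ℝ) (hg : IsSymmCont n g U)
    (hlor : IsLorentzian n g U)
    (T : Esp n → Esp n) (hT : IsTimeOrientation n g T U)
    (p : Esp n) (hp : p ∈ U) (ε : ℝ) (hε : 0 < ε) :
    ∃ V : Set (Esp n), IsOpen V ∧ p ∈ V ∧ V ⊆ U ∧
      ∀ a b : ℝ, a ≤ b → ∀ γ : ℝ → Esp n,
        GCausalOn n g T V γ (Icc a b) → Leuc n γ a b < ε := by
  classical
  obtain ⟨r, c, hr, hc, hrU, hcone⟩ := uniform_cone n U hU g hg hlor T hT p hp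
  obtain ⟨ℓ, hℓval⟩ : ∃ ℓ : Esp n →L[ℝ] ℝ, ∀ X : Esp n, ℓ X = -(g p (T p) X) :=
    ⟨-(LinearMap.toContinuousLinearMap (g p (T p))), fun X => by
      simp [LinearMap.coe_toContinuousLinearMap']⟩
  set N : ℝ := ‖ℓ‖ with hN
  have hNnn : 0 ≤ N := norm_nonneg _
  set r' : ℝ := min r (c * ε / (2 * (N + 1))) with hr'def
  have hr'pos : 0 < r' := lt_min hr (by positivity)
  have hr'r : r' ≤ r := min_le_left _ _
  have hball : Metric.ball p r' ⊆ Metric.closedBall p r :=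
    Metric.ball_subset_closedBall.trans (Metric.closedBall_subset_closedBall hr'r)
  refine ⟨Metric.ball p r', Metric.isOpen_ball, Metric.mem_ball_self hr'pos,
    hball.trans hrU, ?_⟩
  intro a b hab γ hγ
  obtain ⟨hlip, hmap, hae⟩ := hγ
  obtain ⟨C, hC⟩ := hlip (Icc a b) Subset.rfl isCompact_Icc
  -- Lipschitz extension of -ℓ∘γ... here f := ℓ ∘ γ (ℓ already has the minus built in)
  have hfl : LipschitzOnWith (‖ℓ‖₊ * C) (ℓ ∘ γ) (Icc a b) :=
    ℓ.lipschitz.comp_lipschitzOnWith hC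
  obtain ⟨f, hfLip, hfEq⟩ := hfl.extend_real
  -- a.e. facts on the restricted measure
  have haeIoo : ∀ᵐ t ∂(volume.restrict (Icc a b)), t ∈ Ioo a b := by
    have h1 : ∀ᵐ t : ℝ, t ≠ a := by
      refine (ae_iff).2 ?_
      simpa using Real.volume_singleton
    have h2 : ∀ᵐ t : ℝ, t ≠ b := by
      refine (ae_iff).2 ?_
      simpa using Real.volume_singleton
    filter_upwards [ae_restrict_mem measurableSet_Icc, ae_restrict_of_ae h1,
      ae_restrict_of_ae h2] with t ht h1t h2t
    exact ⟨lt_of_le_of_ne ht.1 (Ne.symm h1t), lt_of_le_of_ne ht.2 h2t⟩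
  -- the pointwise inequality
  have haekey : ∀ᵐ t ∂(volume.restrict (Icc a b)),
      ‖deriv γ t‖ ≤ c⁻¹ * deriv f t ∧ ‖deriv γ t‖ ≤ (C : ℝ) := by
    filter_upwards [hae, haeIoo] with t ht htIoo
    obtain ⟨hdiff, hX0, hXX, hTX⟩ := ht
    have htIcc : t ∈ Icc a b := Ioo_subset_Icc_self htIoo
    have hγt : γ t ∈ Metric.closedBall p r := hball (hmap htIcc)
    have hcone' := hcone (γ t) hγt (deriv γ t) hXX hTX
    have hIccnhds : Icc a b ∈ 𝓝 t := mem_of_superset (isOpen_Ioo.mem_nhds htIoo)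
      Ioo_subset_Icc_self
    have hdb : ‖deriv γ t‖ ≤ (C : ℝ) := norm_deriv_le_of_lipOn hC hIccnhds
    have hfeq : f =ᶠ[𝓝 t] (ℓ ∘ γ) :=
      Filter.eventuallyEq_of_mem hIccnhds (fun x hx => (hfEq hx).symm)
    have hder1 : deriv f t = deriv (ℓ ∘ γ) t := hfeq.deriv_eq
    have hder2 : deriv (ℓ ∘ γ) t = ℓ (deriv γ t) :=
      (ℓ.hasFDerivAt.comp_hasDerivAt t hdiff.hasDerivAt).deriv
    have hineq : c * ‖deriv γ t‖ ≤ deriv f t := by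
      rw [hder1, hder2, hℓval]
      exact hcone'
    constructor
    · rw [inv_mul_eq_div, le_div_iff₀ hc, mul_comm]
      exact hineq
    · exact hdb
  -- integrability
  have hmeasγ : AEStronglyMeasurable (fun t => ‖deriv γ t‖)
      (volume.restrict (Ι a b)) := ((measurable_deriv γ).norm).aestronglyMeasurable
  have hIoc : Ι a b = Ioc a b := uIoc_of_le hab
  have haekey' : ∀ᵐ t ∂(volume.restrict (Ioc a b)),
      ‖deriv γ t‖ ≤ c⁻¹ * deriv f t ∧ ‖deriv γ t‖ ≤ (C : ℝ) :=
    ae_restrict_of_ae_restrict_of_subset Ioc_subset_Icc_self haekey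
  have hint1 : IntervalIntegrable (fun t => ‖deriv γ t‖) volume a b := by
    constructor
    · refine Integrable.mono' (integrable_const (C : ℝ))
        ((measurable_deriv γ).norm).aestronglyMeasurable ?_
      filter_upwards [haekey'] with t ht
      simpa using ht.2
    · rw [Ioc_eq_empty (by simpa using hab)]
      exact integrableOn_empty
  have hfderbound : ∀ t : ℝ, ‖deriv f t‖ ≤ ((‖ℓ‖₊ * C : NNReal) : ℝ) := fun t =>
    norm_deriv_le_of_lipOn (hfLip.lipschitzOnWith (s := univ)) univ_mem
  have hint2' : IntervalIntegrable (deriv f) volume a b := by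
    constructor <;>
    · refine Integrable.mono' (integrable_const ((‖ℓ‖₊ * C : NNReal) : ℝ))
        (measurable_deriv f).aestronglyMeasurable
        (Eventually.of_forall fun t => hfderbound t)
  have hint2 : IntervalIntegrable (fun t => c⁻¹ * deriv f t) volume a b :=
    hint2'.const_mul _
  -- the comparison
  have hcomp : Leuc n γ a b ≤ c⁻¹ * (f b - f a) := by
    have h1 : Leuc n γ a b ≤ ∫ t in a..b, c⁻¹ * deriv f t := by
      refine intervalIntegral.integral_mono_ae_restrict hab hint1 hint2 ?_
      filter_upwards [haekey] with t ht using ht.1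
    have h2 : ∫ t in a..b, c⁻¹ * deriv f t = c⁻¹ * ∫ t in a..b, deriv f t :=
      intervalIntegral.integral_const_mul _ _
    have h3 : ∫ t in a..b, deriv f t = f b - f a := ftc_lip hfLip a b hab
    rw [h2, h3] at h1
    exact h1
  -- bounding f b - f a
  have hfb : f b = ℓ (γ b) := (hfEq (right_mem_Icc.2 hab)).symm
  have hfa : f a = ℓ (γ a) := (hfEq (left_mem_Icc.2 hab)).symm
  have hsub : f b - f a = ℓ (γ b - γ a) := by rw [hfb, hfa, map_sub]
  have hnorm : ‖γ b - γ a‖ ≤ 2 * r' := by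
    have hga : γ a ∈ Metric.ball p r' := hmap (left_mem_Icc.2 hab)
    have hgb : γ b ∈ Metric.ball p r' := hmap (right_mem_Icc.2 hab)
    have := dist_triangle (γ b) p (γ a)
    rw [Metric.mem_ball] at hga hgb
    rw [← dist_eq_norm]
    have hpd : dist p (γ a) = dist (γ a) p := dist_comm _ _
    linarith [this, hga, hgb, hpd.le, hpd.ge]
  have hbound : f b - f a ≤ N * (2 * r') := by
    rw [hsub]
    calc ℓ (γ b - γ a) ≤ |ℓ (γ b - γ a)| := le_abs_self _
      _ = ‖ℓ (γ b - γ a)‖ := rfl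
      _ ≤ N * ‖γ b - γ a‖ := ℓ.le_opNorm _
      _ ≤ N * (2 * r') := by
          exact mul_le_mul_of_nonneg_left hnorm hNnn
  have hfinal : c⁻¹ * (f b - f a) < ε := by
    have h2 : r' ≤ c * ε / (2 * (N + 1)) := min_le_right _ _
    have hN1 : (0:ℝ) < N + 1 := by linarith
    have h3 : N * (2 * r') ≤ N * (2 * (c * ε / (2 * (N + 1)))) := by nlinarith
    have h4 : c⁻¹ * (f b - f a) ≤ c⁻¹ * (N * (2 * (c * ε / (2 * (N + 1))))) :=
      mul_le_mul_of_nonneg_left (hbound.trans h3) (by positivity)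
    have h5 : c⁻¹ * (N * (2 * (c * ε / (2 * (N + 1))))) = ε * (N / (N + 1)) := by
      field_simp
    rw [h5] at h4
    have h6 : ε * (N / (N + 1)) < ε := by
      have hq : N / (N + 1) < 1 := by rw [div_lt_one hN1]; linarith
      nlinarith
    linarith
  exact lt_of_le_of_lt hcomp hfinal
end
end

section
/- (Proposition 2.27 together with Lemma 2.26, chart version: uniform limits of causal curves are causal.) Let U, g, T be as in the context, with g Lorentzian and T a time orientation. Let I be a real interval and let γₙ : I → U be g-causal curves with ‖γₙ'(t)‖ = 1 for almost every t (Euclidean unit speed), converging uniformly on every compact subset of I to a locally Lipschitz curve γ : I → U. Then γ is a g-causal curve; moreover, at every t where γ is differentiable with γ'(t) ≠ 0, the vector γ'(t) is future-directed causal at γ(t). -/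
open MeasureTheory Set Filter

noncomputable section

set_option maxHeartbeats 1600000

section Helpers

theorem gexpand (n : ℕ) (g : Esp n → Esp n →ₗ[ℝ] Esp n →ₗ[ℝ] ℝ) (y v w : Esp n) :
    g y v w = ∑ μ, ∑ ν, v μ * w ν * g y (ee n μ) (ee n ν) := by
  have hv := (EuclideanSpace.basisFun (Fin (n+1)) ℝ).sum_repr v
  simp only [EuclideanSpace.basisFun_repr, EuclideanSpace.basisFun_apply] at hv
  have hw := (EuclideanSpace.basisFun (Fin (n+1)) ℝ).sum_repr w
  simp only [EuclideanSpace.basisFun_repr, EuclideanSpace.basisFun_apply] at hw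
  conv_lhs => rw [← hv, ← hw]
  simp only [map_sum, _root_.map_smul, LinearMap.sum_apply, LinearMap.smul_apply, smul_eq_mul,
    Finset.mul_sum, Finset.sum_mul, ee]
  rw [Finset.sum_comm]
  exact Finset.sum_congr rfl fun μ _ => Finset.sum_congr rfl fun ν _ => by ring

theorem coord_tendsto {n : ℕ} {v : ℕ → Esp n} {v0 : Esp n}
    (hv : Filter.Tendsto v Filter.atTop (nhds v0)) (μ : Fin (n + 1)) :
    Filter.Tendsto (fun k => v k μ) Filter.atTop (nhds (v0 μ)) :=
  ((EuclideanSpace.proj (𝕜 := ℝ) μ).continuous.tendsto v0).comp hv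

theorem g_tendsto {n : ℕ} {U : Set (Esp n)} {g : Esp n → Esp n →ₗ[ℝ] Esp n →ₗ[ℝ] ℝ}
    (hg2 : ∀ μ ν : Fin (n + 1), ContinuousOn (fun x => g x (ee n μ) (ee n ν)) U)
    {x : Esp n} (hx : x ∈ U) {y : ℕ → Esp n} (hyU : ∀ k, y k ∈ U)
    (hy : Filter.Tendsto y Filter.atTop (nhds x))
    {v w : ℕ → Esp n} {v0 w0 : Esp n}
    (hv : Filter.Tendsto v Filter.atTop (nhds v0))
    (hw : Filter.Tendsto w Filter.atTop (nhds w0)) :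
    Filter.Tendsto (fun k => g (y k) (v k) (w k)) Filter.atTop (nhds (g x v0 w0)) := by
  have hy' : Filter.Tendsto y Filter.atTop (nhdsWithin x U) :=
    tendsto_nhdsWithin_of_tendsto_nhds_of_eventually_within y hy
      (Filter.Eventually.of_forall hyU)
  have : ∀ k, g (y k) (v k) (w k) = ∑ μ, ∑ ν, v k μ * w k ν * g (y k) (ee n μ) (ee n ν) :=
    fun k => gexpand n g _ _ _
  simp only [this, gexpand n g x v0 w0]
  refine tendsto_finset_sum _ fun μ _ => tendsto_finset_sum _ fun ν _ => ?_
  exact ((coord_tendsto hv μ).mul (coord_tendsto hw ν)).mul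
    (((hg2 μ ν x hx).tendsto).comp hy')

theorem eta_ne_zero_comp {n : ℕ} {v : Esp n} (hv : etaB n v v ≤ 0) (hv0 : v ≠ 0) :
    v 0 ≠ 0 := by
  intro h0
  apply hv0
  have hsum : ∑ i ∈ Finset.univ.erase (0 : Fin (n + 1)), v i * v i ≤ 0 := by
    have := hv; unfold etaB at this; rw [h0] at this; linarith
  have hz : ∀ i ∈ Finset.univ.erase (0 : Fin (n + 1)), v i * v i = 0 := by
    intro i hi
    have h1 : ∀ j ∈ Finset.univ.erase (0 : Fin (n + 1)), 0 ≤ v j * v j :=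
      fun j _ => mul_self_nonneg _
    have h2 : ∑ i ∈ Finset.univ.erase (0 : Fin (n + 1)), v i * v i = 0 :=
      le_antisymm hsum (Finset.sum_nonneg h1)
    exact (Finset.sum_eq_zero_iff_of_nonneg h1).1 h2 i hi
  ext i
  by_cases hi : i = 0
  · subst hi; simpa using h0
  · have h3 := hz i (Finset.mem_erase.2 ⟨hi, Finset.mem_univ i⟩)
    have : v i = 0 := by nlinarith [h3]
    simpa using this

theorem eta_sign {n : ℕ} {s v : Esp n} (hs : etaB n s s < 0) (hv : etaB n v v ≤ 0)
    (hv0 : v ≠ 0) : etaB n s v * (s 0 * v 0) < 0 := by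
  have hvz : v 0 ≠ 0 := eta_ne_zero_comp hv hv0
  unfold etaB at hs hv
  set E := Finset.univ.erase (0 : Fin (n + 1)) with hE
  have hCS : (∑ i ∈ E, s i * v i) ^ 2 ≤ (∑ i ∈ E, s i ^ 2) * (∑ i ∈ E, v i ^ 2) := by
    have := Finset.sum_mul_sq_le_sq_mul_sq E (fun i => s i) (fun i => v i)
    simpa using this
  have hsq : ∀ (w : Esp n), ∑ i ∈ E, w i * w i = ∑ i ∈ E, w i ^ 2 :=
    fun w => Finset.sum_congr rfl fun i _ => (sq (w i)).symm
  have hs' : ∑ i ∈ E, s i ^ 2 < s 0 ^ 2 := by rw [← hsq]; nlinarith [hs]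
  have hv' : ∑ i ∈ E, v i ^ 2 ≤ v 0 ^ 2 := by rw [← hsq]; nlinarith [hv]
  have hv02 : 0 < v 0 ^ 2 := by positivity
  have hsnn : (0:ℝ) ≤ ∑ i ∈ E, s i ^ 2 := Finset.sum_nonneg fun i _ => sq_nonneg _
  have key : (∑ i ∈ E, s i * v i) ^ 2 < (s 0 * v 0) ^ 2 := by
    calc (∑ i ∈ E, s i * v i) ^ 2 ≤ (∑ i ∈ E, s i ^ 2) * (∑ i ∈ E, v i ^ 2) := hCS
    _ ≤ (∑ i ∈ E, s i ^ 2) * v 0 ^ 2 := by nlinarith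
    _ < s 0 ^ 2 * v 0 ^ 2 := by nlinarith
    _ = (s 0 * v 0) ^ 2 := by ring
  have heq : etaB n s v = -(s 0 * v 0) + ∑ i ∈ E, s i * v i := rfl
  rw [heq]
  nlinarith [key, sq_nonneg ((∑ i ∈ E, s i * v i) - s 0 * v 0)]

theorem eta_pair_neg {n : ℕ} {s u v : Esp n} (hs : etaB n s s < 0) (hu : etaB n u u < 0)
    (hsu : etaB n s u < 0) (hv : etaB n v v ≤ 0) (hv0 : v ≠ 0) (hsv : etaB n s v ≤ 0) :
    etaB n u v < 0 := by
  have hu0 : u ≠ 0 := by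
    intro h; rw [h] at hu; unfold etaB at hu; simp at hu
  have h1 := eta_sign hs hv hv0
  have h2 := eta_sign hs hu.le hu0
  have h3 := eta_sign hu hv hv0
  have hA : 0 < s 0 * v 0 := by nlinarith [h1, hsv]
  have hB : 0 < s 0 * u 0 := by nlinarith [h2, hsu]
  have hC : 0 < u 0 * v 0 := by nlinarith [hA, hB, sq_nonneg (s 0)]
  nlinarith [h3, hC]

theorem eta_dual {n : ℕ} {s v : Esp n} (hs : etaB n s s < 0) (hv : 0 < etaB n v v) :
    ∃ u : Esp n, etaB n u u < 0 ∧ etaB n s u < 0 ∧ 0 < etaB n u v := by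
  classical
  unfold etaB at hs hv
  set E := Finset.univ.erase (0 : Fin (n + 1)) with hE
  set W : ℝ := ∑ i ∈ E, v i * v i with hW
  have hWv : v 0 * v 0 < W := by linarith
  have hW0 : 0 < W := lt_of_le_of_lt (mul_self_nonneg _) hWv
  have hsE : ∑ i ∈ E, s i * s i < s 0 * s 0 := by linarith
  have hs0 : s 0 ≠ 0 := by
    intro h; rw [h] at hsE
    exact absurd hsE (not_lt.2 (by
      nlinarith [Finset.sum_nonneg (fun i (_ : i ∈ E) => mul_self_nonneg (s i))]))
  set σ : ℝ := if 0 < s 0 then 1 else -1 with hσ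
  have hσ2 : σ * σ = 1 := by rw [hσ]; split <;> norm_num
  have hσs : 0 < σ * s 0 := by
    rw [hσ]; split
    · simpa using ‹0 < s 0›
    · rcases lt_or_eq_of_le (not_lt.1 ‹¬ 0 < s 0›) with h | h
      · nlinarith
      · exact absurd h hs0
  obtain ⟨r, hrW, hrc⟩ : ∃ r : ℝ, Real.sqrt W < r ∧ σ * v 0 * r < W := by
    by_cases hb : 0 < σ * v 0
    · have h2 : (σ * v 0) ^ 2 ≤ v 0 * v 0 := by nlinarith [hσ2]
      have hvW : σ * v 0 < Real.sqrt W := by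
        nlinarith [Real.sq_sqrt hW0.le, Real.sqrt_nonneg W, hWv, h2]
      have h1 : Real.sqrt W < W / (σ * v 0) := by
        rw [lt_div_iff₀ hb]
        nlinarith [Real.sqrt_nonneg W, Real.sq_sqrt hW0.le]
      refine ⟨(Real.sqrt W + W / (σ * v 0)) / 2, by linarith, ?_⟩
      have h3 : (Real.sqrt W + W / (σ * v 0)) / 2 < W / (σ * v 0) := by linarith
      calc σ * v 0 * ((Real.sqrt W + W / (σ * v 0)) / 2) < σ * v 0 * (W / (σ * v 0)) :=
            mul_lt_mul_of_pos_left h3 hb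
      _ = W := by field_simp; exact div_self hb.ne'
    · exact ⟨Real.sqrt W + 1, by nlinarith [Real.sqrt_nonneg W],
        by nlinarith [not_lt.1 hb, Real.sqrt_nonneg W]⟩
  have hr0 : 0 < r := lt_of_le_of_lt (Real.sqrt_nonneg W) hrW
  have hrr : W < r * r := by nlinarith [Real.sq_sqrt hW0.le, Real.sqrt_nonneg W]
  set t : ℝ := σ * r with ht
  set u : Esp n := v + (t - v 0) • EuclideanSpace.single (0 : Fin (n+1)) (1:ℝ) with hu
  have hu0 : u 0 = t := by
    rw [hu]; simp [EuclideanSpace.single_apply]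
  have hui : ∀ i ∈ E, u i = v i := by
    intro i hi
    have hi0 : i ≠ 0 := (Finset.mem_erase.1 hi).1
    rw [hu]; simp [EuclideanSpace.single_apply, hi0]
  have hsumuu : ∑ i ∈ E, u i * u i = W := by
    rw [hW]; exact Finset.sum_congr rfl fun i hi => by rw [hui i hi]
  have hsumsu : ∑ i ∈ E, s i * u i = ∑ i ∈ E, s i * v i :=
    Finset.sum_congr rfl fun i hi => by rw [hui i hi]
  have hsumuv : ∑ i ∈ E, u i * v i = W := by
    rw [hW]; exact Finset.sum_congr rfl fun i hi => by rw [hui i hi]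
  have hCS : (∑ i ∈ E, s i * v i) ^ 2 ≤ (∑ i ∈ E, s i * s i) * W := by
    have h1 := Finset.sum_mul_sq_le_sq_mul_sq E (fun i => s i) (fun i => v i)
    have h2 : ∑ i ∈ E, s i ^ 2 = ∑ i ∈ E, s i * s i :=
      Finset.sum_congr rfl fun i _ => sq (s i)
    have h3 : ∑ i ∈ E, v i ^ 2 = W := by
      rw [hW]; exact Finset.sum_congr rfl fun i _ => sq (v i)
    calc (∑ i ∈ E, s i * v i) ^ 2 ≤ (∑ i ∈ E, s i ^ 2) * (∑ i ∈ E, v i ^ 2) := by simpa using h1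
    _ = (∑ i ∈ E, s i * s i) * W := by rw [h2, h3]
  refine ⟨u, ?_, ?_, ?_⟩
  · unfold etaB
    rw [← hE, hu0, hsumuu, ht]
    nlinarith [hσ2, hrr]
  · unfold etaB
    rw [← hE, hu0, hsumsu, ht]
    have hSnn : (0:ℝ) ≤ ∑ i ∈ E, s i * s i :=
      Finset.sum_nonneg (fun i (_ : i ∈ E) => mul_self_nonneg (s i))
    have c1 : (∑ i ∈ E, s i * s i) * W ≤ (∑ i ∈ E, s i * s i) * (r * r) :=
      mul_le_mul_of_nonneg_left hrr.le hSnn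
    have c2 : (∑ i ∈ E, s i * s i) * (r * r) < (s 0 * s 0) * (r * r) :=
      mul_lt_mul_of_pos_right hsE (by positivity)
    have c3 : (∑ i ∈ E, s i * v i) ^ 2 < (s 0 * s 0) * (r * r) :=
      lt_of_le_of_lt (hCS.trans c1) c2
    have hpos : 0 < σ * s 0 * r := mul_pos hσs hr0
    nlinarith [c3, hpos, hσ2, mul_self_nonneg ((∑ i ∈ E, s i * v i) - σ * s 0 * r)]
  · unfold etaB
    rw [← hE, hu0, hsumuv, ht]
    nlinarith [hrc]

/-- At a point where `g` is Lorentzian with timelike `T x`, a future timelike `w` pairs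
negatively with any nonzero causal `Y`. -/
theorem g_pair_neg {n : ℕ} {g : Esp n → Esp n →ₗ[ℝ] Esp n →ₗ[ℝ] ℝ} {T : Esp n → Esp n}
    {x : Esp n} (L : Esp n ≃ₗ[ℝ] Esp n) (hL : ∀ v w : Esp n, g x (L v) (L w) = etaB n v w)
    {w Y : Esp n} (hw : g x w w < 0) (hwT : g x (T x) w < 0) (hTx : g x (T x) (T x) < 0)
    (hY : g x Y Y ≤ 0) (hYT : g x (T x) Y ≤ 0) (hY0 : Y ≠ 0) : g x w Y < 0 := by
  have e1 : g x w Y = etaB n (L.symm w) (L.symm Y) := by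
    rw [← hL]; simp
  have e2 : g x w w = etaB n (L.symm w) (L.symm w) := by rw [← hL]; simp
  have e3 : g x (T x) w = etaB n (L.symm (T x)) (L.symm w) := by rw [← hL]; simp
  have e4 : g x (T x) (T x) = etaB n (L.symm (T x)) (L.symm (T x)) := by rw [← hL]; simp
  have e5 : g x Y Y = etaB n (L.symm Y) (L.symm Y) := by rw [← hL]; simp
  have e6 : g x (T x) Y = etaB n (L.symm (T x)) (L.symm Y) := by rw [← hL]; simp
  rw [e1]
  refine eta_pair_neg (by rw [← e4]; exact hTx) (by rw [← e2]; exact hw)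
    (by rw [← e3]; exact hwT) (by rw [← e5]; exact hY) ?_ (by rw [← e6]; exact hYT)
  simpa using hY0

theorem g_dual {n : ℕ} {g : Esp n → Esp n →ₗ[ℝ] Esp n →ₗ[ℝ] ℝ} {T : Esp n → Esp n}
    {x : Esp n} (L : Esp n ≃ₗ[ℝ] Esp n) (hL : ∀ v w : Esp n, g x (L v) (L w) = etaB n v w)
    (hTx : g x (T x) (T x) < 0) {Y : Esp n} (hY : 0 < g x Y Y) :
    ∃ w : Esp n, g x w w < 0 ∧ g x (T x) w < 0 ∧ 0 < g x w Y := by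
  have e4 : g x (T x) (T x) = etaB n (L.symm (T x)) (L.symm (T x)) := by rw [← hL]; simp
  have e5 : g x Y Y = etaB n (L.symm Y) (L.symm Y) := by rw [← hL]; simp
  obtain ⟨u, hu1, hu2, hu3⟩ := eta_dual (s := L.symm (T x)) (v := L.symm Y)
    (by rw [← e4]; exact hTx) (by rw [← e5]; exact hY)
  refine ⟨L u, ?_, ?_, ?_⟩
  · rw [show g x (L u) (L u) = etaB n u u from hL u u]; exact hu1
  · have : g x (T x) (L u) = etaB n (L.symm (T x)) u := by rw [← hL]; simp
    rw [this]; exact hu2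
  · have : g x (L u) Y = etaB n u (L.symm Y) := by rw [← hL]; simp
    rw [this]; exact hu3

end Helpers


/-- Master compactness estimate: a future timelike test vector `w` at `x` pairs uniformly
negatively with unit causal vectors at all nearby points of `U`. -/
theorem master {n : ℕ} {U : Set (Esp n)} {g : Esp n → Esp n →ₗ[ℝ] Esp n →ₗ[ℝ] ℝ}
    {T : Esp n → Esp n} (hg : IsSymmCont n g U) (hlor : IsLorentzian n g U)
    (hTc : ContinuousOn T U) {x : Esp n} (hx : x ∈ U) (hTx : g x (T x) (T x) < 0)
    {w : Esp n} (hw : g x w w < 0) (hwT : g x (T x) w < 0) :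
    ∃ c : ℝ, 0 < c ∧ ∃ δ : ℝ, 0 < δ ∧ ∀ y ∈ U, dist y x < δ →
      ∀ Y : Esp n, ‖Y‖ = 1 → g y Y Y ≤ 0 → g y (T y) Y < 0 → g x w Y ≤ -c := by
  by_contra hcon
  push_neg at hcon
  have H : ∀ k : ℕ, ∃ y ∈ U, dist y x < 1 / (k + 1) ∧ ∃ Y : Esp n, ‖Y‖ = 1 ∧
      g y Y Y ≤ 0 ∧ g y (T y) Y < 0 ∧ -(1 / (k + 1) : ℝ) < g x w Y := by
    intro k
    have hk : (0:ℝ) < 1 / (k + 1) := by positivity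
    obtain ⟨y, hyU, hyd, Y, hY1, hY2, hY3, hY4⟩ := hcon (1 / (k+1)) hk (1 / (k+1)) hk
    exact ⟨y, hyU, hyd, Y, hY1, hY2, hY3, by linarith⟩
  choose y hyU hyd Y hY1 hY2 hY3 hY4 using H
  have hYsp : ∀ k, Y k ∈ Metric.sphere (0 : Esp n) 1 := by
    intro k; rw [mem_sphere_zero_iff_norm]; exact hY1 k
  obtain ⟨Z, hZsp, φ, hφmono, hφlim⟩ :=
    (isCompact_sphere (0 : Esp n) 1).tendsto_subseq hYsp
  have hinv : Filter.Tendsto (fun k : ℕ => 1 / ((k:ℝ) + 1)) Filter.atTop (nhds 0) :=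
    tendsto_one_div_add_atTop_nhds_zero_nat
  have hyx : Filter.Tendsto (fun k => y (φ k)) Filter.atTop (nhds x) := by
    rw [tendsto_iff_dist_tendsto_zero]
    refine squeeze_zero (fun k => dist_nonneg) (fun k => (hyd (φ k)).le.trans ?_) hinv
    have h5 : (k:ℝ) ≤ (φ k : ℝ) := by exact_mod_cast hφmono.id_le k
    exact one_div_le_one_div_of_le (by positivity) (by linarith)
  have hZ0 : Z ≠ 0 := by
    intro h; rw [h] at hZsp; simp at hZsp
  -- limits
  have l1 : Filter.Tendsto (fun k => g (y (φ k)) (Y (φ k)) (Y (φ k))) Filter.atTop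
      (nhds (g x Z Z)) := g_tendsto hg.2 hx (fun k => hyU (φ k)) hyx hφlim hφlim
  have l2 : Filter.Tendsto (fun k => g (y (φ k)) (T (y (φ k))) (Y (φ k))) Filter.atTop
      (nhds (g x (T x) Z)) := by
    refine g_tendsto hg.2 hx (fun k => hyU (φ k)) hyx ?_ hφlim
    have hTt : Filter.Tendsto (fun k => T (y (φ k))) Filter.atTop (nhds (T x)) := by
      refine ((hTc x hx).tendsto).comp ?_
      exact tendsto_nhdsWithin_of_tendsto_nhds_of_eventually_within _ hyx
        (Filter.Eventually.of_forall fun k => hyU (φ k))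
    exact hTt
  have l3 : Filter.Tendsto (fun k => g x w (Y (φ k))) Filter.atTop (nhds (g x w Z)) :=
    g_tendsto hg.2 hx (fun _ => hx) tendsto_const_nhds tendsto_const_nhds hφlim
  have hZc : g x Z Z ≤ 0 := le_of_tendsto l1 (Filter.Eventually.of_forall fun k => hY2 (φ k))
  have hZT : g x (T x) Z ≤ 0 :=
    le_of_tendsto l2 (Filter.Eventually.of_forall fun k => (hY3 (φ k)).le)
  have hZw : 0 ≤ g x w Z := by
    have hneg : Filter.Tendsto (fun k : ℕ => -(1 / ((φ k : ℝ) + 1))) Filter.atTop (nhds 0) := by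
      rw [show (0:ℝ) = -0 by norm_num]
      refine Filter.Tendsto.neg ?_
      refine squeeze_zero (fun k => by positivity) (fun k => ?_) hinv
      have h5 : (k:ℝ) ≤ (φ k : ℝ) := by exact_mod_cast hφmono.id_le k
      exact one_div_le_one_div_of_le (by positivity) (by linarith)
    exact le_of_tendsto_of_tendsto' hneg l3 fun k => (hY4 (φ k)).le
  obtain ⟨L, hL⟩ := hlor x hx
  have := g_pair_neg L hL hw hwT hTx hZc hZT hZ0
  linarith


/-- Fundamental increment estimate: a Lipschitz function whose a.e. derivative is `≤ c`
on `[a,b]` increases at most at rate `c`. -/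
theorem inc {f : ℝ → ℝ} {C : NNReal} {a b c : ℝ} (hab : a < b)
    (hf : LipschitzOnWith C f (Icc a b))
    (hae : ∀ᵐ t ∂(volume.restrict (Icc a b)), DifferentiableAt ℝ f t ∧ deriv f t ≤ c) :
    f b - f a ≤ c * (b - a) := by
  obtain ⟨F, hFlip, hFeq⟩ := hf.extend_real
  have hFc : Continuous F := hFlip.continuous
  have haeIoo : ∀ᵐ t ∂(volume.restrict (Ioo a b)), DifferentiableAt ℝ F t ∧ deriv F t ≤ c := by
    have h1 : ∀ᵐ t ∂(volume.restrict (Ioo a b)), DifferentiableAt ℝ f t ∧ deriv f t ≤ c :=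
      ae_restrict_of_ae_restrict_of_subset Ioo_subset_Icc_self hae
    have h2 : ∀ᵐ t ∂(volume.restrict (Ioo a b)), t ∈ Ioo a b :=
      ae_restrict_mem measurableSet_Ioo
    filter_upwards [h1, h2] with t ht hmem
    have hnb : Icc a b ∈ nhds t := Icc_mem_nhds hmem.1 hmem.2
    have heq : f =ᶠ[nhds t] F := Filter.eventually_of_mem hnb hFeq
    refine ⟨ht.1.congr_of_eventuallyEq heq.symm, ?_⟩
    rw [Filter.EventuallyEq.deriv_eq heq.symm]; exact ht.2
  set h : ℕ → ℝ := fun k => 1 / ((k : ℝ) + 1) with hh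
  have hhpos : ∀ k, 0 < h k := fun k => by positivity
  have hh0 : Filter.Tendsto h Filter.atTop (nhds 0) := tendsto_one_div_add_atTop_nhds_zero_nat
  -- difference quotients converge to derivatives
  have hpt : ∀ (W : ℝ → ℝ) (t d : ℝ), HasDerivAt W d t →
      Filter.Tendsto (fun k => (W (t + h k) - W t) / h k) Filter.atTop (nhds d) := by
    intro W t d hW
    have hslope := hasDerivAt_iff_tendsto_slope.1 hW
    have hseq : Filter.Tendsto (fun k => t + h k) Filter.atTop (nhdsWithin t {t}ᶜ) := by
      refine tendsto_nhdsWithin_of_tendsto_nhds_of_eventually_within _ ?_ ?_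
      · have h6 : Filter.Tendsto (fun _ : ℕ => t) Filter.atTop (nhds t) := tendsto_const_nhds
        simpa using h6.add hh0
      · exact Filter.Eventually.of_forall fun k => by
          simp only [mem_compl_iff, mem_singleton_iff]
          intro hcontra
          exact absurd (by linarith [hhpos k] : (0:ℝ) < 0) (lt_irrefl 0)
    have h7 := hslope.comp hseq
    refine h7.congr fun k => ?_
    show slope W t (t + h k) = _
    rw [slope_def_field]
    congr 1
    ring
  set φ : ℕ → ℝ → ℝ := fun k t => (F (t + h k) - F t) / h k with hφ
  have hφcont : ∀ k, Continuous (φ k) := fun k =>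
    ((hFc.comp (continuous_id.add continuous_const)).sub hFc).div_const _
  -- dominated convergence
  have hmeasIoo : ∀ k, AEStronglyMeasurable (φ k) (volume.restrict (Ioo a b)) := fun k =>
    (hφcont k).aestronglyMeasurable
  have hbound : ∀ k, ∀ᵐ t ∂(volume.restrict (Ioo a b)), ‖φ k t‖ ≤ (C : ℝ) := by
    intro k
    refine Filter.Eventually.of_forall fun t => ?_
    have hd := hFlip.dist_le_mul (t + h k) t
    rw [Real.dist_eq, Real.dist_eq] at hd
    have h8 : |(t + h k) - t| = h k := by
      rw [show (t + h k) - t = h k by ring, abs_of_pos (hhpos k)]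
    rw [h8] at hd
    rw [Real.norm_eq_abs, hφ]
    simp only
    rw [abs_div, abs_of_pos (hhpos k), div_le_iff₀ (hhpos k)]
    exact hd
  have hbint : Integrable (fun _ : ℝ => (C:ℝ)) (volume.restrict (Ioo a b)) :=
    integrable_const _
  have hlim : ∀ᵐ t ∂(volume.restrict (Ioo a b)),
      Filter.Tendsto (fun k => φ k t) Filter.atTop (nhds (deriv F t)) := by
    filter_upwards [haeIoo] with t ht
    exact hpt F t (deriv F t) ht.1.hasDerivAt
  have hconv := MeasureTheory.tendsto_integral_of_dominated_convergence
    (bound := fun _ => (C:ℝ)) hmeasIoo hbint hbound hlim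
  -- the other limit computation
  set G : ℝ → ℝ := fun x => ∫ s in a..x, F s with hG
  have hGd : ∀ x : ℝ, HasDerivAt G (F x) x := fun x =>
    intervalIntegral.integral_hasDerivAt_right (hFc.intervalIntegrable _ _)
      (hFc.stronglyMeasurableAtFilter _ _) hFc.continuousAt
  have hintid : ∀ k, ∫ t in Ioo a b, φ k t =
      (G (b + h k) - G b) / h k - (G (a + h k) - G a) / h k := by
    intro k
    have e0 : ∫ t in Ioo a b, φ k t = ∫ t in a..b, φ k t := by
      rw [intervalIntegral.integral_of_le hab.le, MeasureTheory.integral_Ioc_eq_integral_Ioo]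
    have i1 : IntervalIntegrable (fun t => F (t + h k)) volume a b :=
      (hFc.comp (continuous_id.add continuous_const)).intervalIntegrable _ _
    have i2 : IntervalIntegrable F volume a b := hFc.intervalIntegrable _ _
    have e1 : ∫ t in a..b, φ k t =
        ((∫ t in a..b, F (t + h k)) - ∫ t in a..b, F t) / h k := by
      rw [hφ]
      simp only
      rw [intervalIntegral.integral_div, intervalIntegral.integral_sub i1 i2]
    have e2 : (∫ t in a..b, F (t + h k)) = ∫ t in (a + h k)..(b + h k), F t :=
      intervalIntegral.integral_comp_add_right F (h k)
    have e3 : (∫ t in (a + h k)..(b + h k), F t) = G (b + h k) - G (a + h k) := by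
      rw [hG]
      simp only
      rw [← intervalIntegral.integral_interval_sub_left (hFc.intervalIntegrable a (b + h k))
        (hFc.intervalIntegrable a (a + h k))]
    have e4 : G a = 0 := intervalIntegral.integral_same
    have e5 : G b = ∫ t in a..b, F t := rfl
    rw [e0, e1, e2, e3, e4, e5]
    ring
  have hother : Filter.Tendsto (fun k => ∫ t in Ioo a b, φ k t) Filter.atTop
      (nhds (F b - F a)) := by
    have h9 := (hpt G b (F b) (hGd b)).sub (hpt G a (F a) (hGd a))
    refine h9.congr fun k => ?_
    rw [hintid k]
  have huniq : (∫ t in Ioo a b, deriv F t) = F b - F a :=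
    tendsto_nhds_unique hconv hother
  -- integrability of deriv F and the final bound
  have hDbd : ∀ t, ‖deriv F t‖ ≤ (C : ℝ) := by
    intro t
    by_cases hd : DifferentiableAt ℝ F t
    · have hslope := hasDerivAt_iff_tendsto_slope.1 hd.hasDerivAt
      have habs : Filter.Tendsto (fun u => |slope F t u|) (nhdsWithin t {t}ᶜ)
          (nhds |deriv F t|) := hslope.abs
      rw [Real.norm_eq_abs]
      refine le_of_tendsto habs ?_
      filter_upwards [self_mem_nhdsWithin] with u hu
      have hut : u ≠ t := hu
      rw [slope_def_field, abs_div]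
      rw [div_le_iff₀ (abs_pos.2 (sub_ne_zero.2 hut))]
      have hd2 := hFlip.dist_le_mul u t
      rw [Real.dist_eq, Real.dist_eq] at hd2
      exact hd2
    · rw [deriv_zero_of_not_differentiableAt hd]
      simpa using C.2
  have hDint : Integrable (fun t => deriv F t) (volume.restrict (Ioo a b)) := by
    refine ⟨(measurable_deriv F).aestronglyMeasurable, ?_⟩
    refine MeasureTheory.HasFiniteIntegral.of_bounded (C := (C:ℝ)) ?_
    exact Filter.Eventually.of_forall hDbd
  have hcint : Integrable (fun _ : ℝ => c) (volume.restrict (Ioo a b)) := integrable_const _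
  have hmono : (∫ t in Ioo a b, deriv F t) ≤ ∫ _t in Ioo a b, c := by
    refine MeasureTheory.integral_mono_ae hDint hcint ?_
    filter_upwards [haeIoo] with t ht
    exact ht.2
  have hcval : (∫ _t in Ioo a b, c) = c * (b - a) := by
    rw [MeasureTheory.setIntegral_const, Real.volume_real_Ioo_of_le hab.le, smul_eq_mul,
      mul_comm]
  have hFab : f b - f a = F b - F a := by
    rw [hFeq (left_mem_Icc.2 hab.le), hFeq (right_mem_Icc.2 hab.le)]
  rw [hFab, ← huniq]
  rw [hcval] at hmono
  exact hmono



theorem slope_bound {n : ℕ} {U : Set (Esp n)}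
    {g : Esp n → Esp n →ₗ[ℝ] Esp n →ₗ[ℝ] ℝ} {T : Esp n → Esp n}
    {s : Set ℝ} (hconn : s.OrdConnected)
    {γseq : ℕ → ℝ → Esp n}
    (hcau : ∀ m : ℕ, GCausalOn n g T U (γseq m) s)
    (hunit : ∀ m : ℕ, ∀ᵐ t ∂(volume.restrict s), ‖deriv (γseq m) t‖ = 1)
    {γ : ℝ → Esp n} (hlip : LocLipOn n γ s)
    (hconv : ∀ K, K ⊆ s → IsCompact K → TendstoUniformlyOn γseq γ atTop K)
    {t₀ : ℝ} (ht₀ : t₀ ∈ s) (hd : DifferentiableAt ℝ γ t₀)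
    {p : ℝ} (hp : p ∈ s) (hpne : p ≠ t₀)
    {w : Esp n} {c δ : ℝ} (hc : 0 < c) (hδ : 0 < δ)
    (hP : ∀ y ∈ U, dist y (γ t₀) < δ → ∀ Y : Esp n, ‖Y‖ = 1 → g y Y Y ≤ 0 →
      g y (T y) Y < 0 → g (γ t₀) w Y ≤ -c) :
    g (γ t₀) w (deriv γ t₀) ≤ -c := by
  classical
  set x := γ t₀ with hx
  set ℓ : Esp n →L[ℝ] ℝ := LinearMap.toContinuousLinearMap (g x w) with hℓ
  have hℓapp : ∀ Y : Esp n, ℓ Y = g x w Y := fun Y => rfl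
  set K₁ : Set ℝ := uIcc t₀ p with hK₁
  have hK₁s : K₁ ⊆ s := hconn.uIcc_subset ht₀ hp
  have hK₁c : IsCompact K₁ := isCompact_uIcc
  obtain ⟨C₀, hC₀⟩ := hlip K₁ hK₁s hK₁c
  set ε₀ : ℝ := δ / (2 * ((C₀ : ℝ) + 1)) with hε₀
  have hε₀pos : 0 < ε₀ := by positivity
  set tk : ℕ → ℝ := fun k => t₀ + (p - t₀) / ((k : ℝ) + 1) with htk
  have htkne : ∀ k, tk k ≠ t₀ := by
    intro k hcon
    rw [htk] at hcon
    simp only [add_eq_left] at hcon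
    have : p - t₀ = 0 := by
      field_simp at hcon
      simpa using hcon
    exact hpne (by linarith)
  have htkK : ∀ k, tk k ∈ K₁ := by
    intro k
    rw [hK₁, ← segment_eq_uIcc]
    have hθ1 : (0:ℝ) < (k:ℝ) + 1 := by positivity
    refine ⟨1 - 1/((k:ℝ)+1), 1/((k:ℝ)+1), ?_, by positivity, by ring, ?_⟩
    · have : 1/((k:ℝ)+1) ≤ 1 := by
        rw [div_le_one hθ1]; linarith
      linarith
    · rw [htk]; simp only [smul_eq_mul]; field_simp; ring
  have htks : ∀ k, tk k ∈ s := fun k => hK₁s (htkK k)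
  have htkt : Filter.Tendsto tk Filter.atTop (nhds t₀) := by
    have h1 : Filter.Tendsto (fun k : ℕ => (p - t₀) * (1/((k:ℝ)+1))) Filter.atTop (nhds 0) := by
      have := tendsto_one_div_add_atTop_nhds_zero_nat.const_mul (p - t₀)
      simpa using this
    have h2 : Filter.Tendsto (fun k : ℕ => t₀ + (p - t₀) * (1/((k:ℝ)+1))) Filter.atTop
        (nhds (t₀ + 0)) := tendsto_const_nhds.add h1
    rw [add_zero] at h2
    refine h2.congr fun k => ?_
    rw [htk]
    simp only
    rw [mul_one_div]
  have htkt' : Filter.Tendsto tk Filter.atTop (nhdsWithin t₀ {t₀}ᶜ) :=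
    tendsto_nhdsWithin_of_tendsto_nhds_of_eventually_within _ htkt
      (Filter.Eventually.of_forall fun k => htkne k)
  have hslope : Filter.Tendsto (fun k => slope γ t₀ (tk k)) Filter.atTop
      (nhds (deriv γ t₀)) :=
    (hasDerivAt_iff_tendsto_slope.1 hd.hasDerivAt).comp htkt'
  have hlconv : Filter.Tendsto (fun k => ℓ (slope γ t₀ (tk k))) Filter.atTop
      (nhds (ℓ (deriv γ t₀))) := (ℓ.continuous.tendsto _).comp hslope
  rw [← hℓapp]
  refine le_of_tendsto hlconv ?_
  -- eventually the slope functional is ≤ -c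
  have hev : ∀ᶠ k in Filter.atTop, dist (tk k) t₀ < ε₀ := by
    have := Metric.tendsto_atTop.1 htkt ε₀ hε₀pos
    obtain ⟨N, hN⟩ := this
    exact Filter.eventually_atTop.2 ⟨N, fun k hk => hN k hk⟩
  filter_upwards [hev] with k hk
  -- set up the interval
  set a : ℝ := min t₀ (tk k) with ha
  set b : ℝ := max t₀ (tk k) with hb
  have hab : a < b := min_lt_max.2 (Ne.symm (htkne k))
  have hIccK : Icc a b ⊆ K₁ := by
    have h1 : uIcc t₀ (tk k) ⊆ K₁ := uIcc_subset_uIcc left_mem_uIcc (htkK k)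
    have h2 : Icc a b = uIcc t₀ (tk k) := rfl
    rw [h2]; exact h1
  have hIccs : Icc a b ⊆ s := hIccK.trans hK₁s
  have haK : a ∈ K₁ := hIccK (left_mem_Icc.2 hab.le)
  have hbK : b ∈ K₁ := hIccK (right_mem_Icc.2 hab.le)
  have hba : b - a ≤ dist (tk k) t₀ := by
    rw [Real.dist_eq, hb, ha]
    rcases le_total t₀ (tk k) with h | h
    · rw [max_eq_right h, min_eq_left h, abs_of_nonneg (by linarith)]
    · rw [max_eq_left h, min_eq_right h, abs_of_nonpos (by linarith)]; ring_nf; rfl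
  -- the main claim
  have claim : ℓ (γ b) - ℓ (γ a) ≤ -c * (b - a) := by
    have hunif := Metric.tendstoUniformlyOn_iff.1 (hconv K₁ hK₁s hK₁c) (δ/2) (half_pos hδ)
    have hstep : ∀ᶠ m in Filter.atTop,
        ℓ (γseq m b) - ℓ (γseq m a) ≤ -c * (b - a) := by
      filter_upwards [hunif] with m hm
      obtain ⟨Cm, hCm⟩ := (hcau m).1 K₁ hK₁s hK₁c
      have hlipm : LipschitzOnWith (‖ℓ‖₊ * Cm) (fun t => ℓ (γseq m t)) (Icc a b) :=
        (ℓ.lipschitz.comp_lipschitzOnWith (hCm.mono hIccK))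
      have haem : ∀ᵐ t ∂(volume.restrict (Icc a b)),
          DifferentiableAt ℝ (fun t => ℓ (γseq m t)) t ∧
            deriv (fun t => ℓ (γseq m t)) t ≤ -c := by
        have a1 : ∀ᵐ t ∂(volume.restrict (Icc a b)),
            DifferentiableAt ℝ (γseq m) t ∧ FDCausal n g T (γseq m t) (deriv (γseq m) t) :=
          ae_restrict_of_ae_restrict_of_subset hIccs (hcau m).2.2
        have a2 : ∀ᵐ t ∂(volume.restrict (Icc a b)), ‖deriv (γseq m) t‖ = 1 :=
          ae_restrict_of_ae_restrict_of_subset hIccs (hunit m)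
        have a3 : ∀ᵐ t ∂(volume.restrict (Icc a b)), t ∈ Icc a b :=
          ae_restrict_mem measurableSet_Icc
        filter_upwards [a1, a2, a3] with t ht1 ht2 ht3
        have hderm : HasDerivAt (fun t => ℓ (γseq m t)) (ℓ (deriv (γseq m) t)) t :=
          ℓ.hasFDerivAt.comp_hasDerivAt t ht1.1.hasDerivAt
        refine ⟨hderm.differentiableAt, ?_⟩
        rw [hderm.deriv]
        -- apply the master property
        have hyU : γseq m t ∈ U := (hcau m).2.1 (hIccs ht3)
        have hdist : dist (γseq m t) x < δ := by
          have d1 : dist (γ t) (γseq m t) < δ/2 := hm t (hIccK ht3)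
          have ht₀K : t₀ ∈ K₁ := by rw [hK₁]; exact left_mem_uIcc
          have d2 : dist (γ t) (γ t₀) ≤ (C₀ : ℝ) * dist t t₀ :=
            hC₀.dist_le_mul t (hIccK ht3) t₀ ht₀K
          have d3 : dist t t₀ ≤ b - a := by
            have ht3' := ht3
            rw [mem_Icc] at ht3'
            have h4 : a ≤ t₀ := min_le_left _ _
            have h5 : t₀ ≤ b := le_max_left _ _
            rw [Real.dist_eq, abs_le]
            constructor <;> linarith [ht3'.1, ht3'.2]
          have d4 : (C₀ : ℝ) * dist t t₀ ≤ (C₀ : ℝ) * ε₀ := by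
            refine mul_le_mul_of_nonneg_left ?_ C₀.coe_nonneg
            calc dist t t₀ ≤ b - a := d3
            _ ≤ dist (tk k) t₀ := hba
            _ ≤ ε₀ := hk.le
          have d5 : (C₀ : ℝ) * ε₀ < δ/2 := by
            have hC0nn : (0:ℝ) ≤ (C₀ : ℝ) := C₀.coe_nonneg
            have h0 : (0:ℝ) < 2*((C₀:ℝ)+1) := by positivity
            rw [hε₀, mul_div_assoc']
            rw [div_lt_div_iff₀ h0 (by norm_num : (0:ℝ) < 2)]
            nlinarith [hδ, hC0nn]
          calc dist (γseq m t) x ≤ dist (γseq m t) (γ t) + dist (γ t) x := dist_triangle _ _ _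
          _ = dist (γ t) (γseq m t) + dist (γ t) (γ t₀) := by rw [dist_comm, hx]
          _ < δ/2 + δ/2 := by
              have := lt_of_le_of_lt (d2.trans d4) d5
              exact add_lt_add d1 this
          _ = δ := by ring
        have h6 := hP (γseq m t) hyU hdist (deriv (γseq m) t) ht2 ht1.2.2.1 ht1.2.2.2
        exact h6
      have := inc hab hlipm haem
      linarith [this]
    have hlima : Filter.Tendsto (fun m => ℓ (γseq m a)) Filter.atTop (nhds (ℓ (γ a))) :=
      (ℓ.continuous.tendsto _).comp ((hconv K₁ hK₁s hK₁c).tendsto_at haK)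
    have hlimb : Filter.Tendsto (fun m => ℓ (γseq m b)) Filter.atTop (nhds (ℓ (γ b))) :=
      (ℓ.continuous.tendsto _).comp ((hconv K₁ hK₁s hK₁c).tendsto_at hbK)
    exact le_of_tendsto (hlimb.sub hlima) hstep
  -- convert the claim into a slope bound
  have hsl : ℓ (slope γ t₀ (tk k)) = (ℓ (γ (tk k)) - ℓ (γ t₀))/(tk k - t₀) := by
    have : slope γ t₀ (tk k) = (tk k - t₀)⁻¹ • (γ (tk k) - γ t₀) := by
      rw [slope_fun_def]; simp [vsub_eq_sub]
    rw [this, _root_.map_smul, map_sub]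
    simp only [smul_eq_mul]
    rw [div_eq_inv_mul]
  rw [hsl]
  rcases lt_or_gt_of_ne (htkne k) with hlt | hgt
  · -- tk k < t₀ : a = tk k, b = t₀
    have ha' : a = tk k := min_eq_right hlt.le
    have hb' : b = t₀ := max_eq_left hlt.le
    rw [ha', hb'] at claim
    rw [div_le_iff_of_neg (by linarith : tk k - t₀ < 0)]
    linarith [claim]
  · have ha' : a = t₀ := min_eq_left hgt.le
    have hb' : b = tk k := max_eq_right hgt.le
    rw [ha', hb'] at claim
    rw [div_le_iff₀ (by linarith : (0:ℝ) < tk k - t₀)]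
    linarith [claim]


theorem key_causal {n : ℕ} {U : Set (Esp n)}
    {g : Esp n → Esp n →ₗ[ℝ] Esp n →ₗ[ℝ] ℝ} {T : Esp n → Esp n}
    (hg : IsSymmCont n g U) (hlor : IsLorentzian n g U) (hT : IsTimeOrientation n g T U)
    {s : Set ℝ} (hconn : s.OrdConnected) (hint : (interior s).Nonempty)
    {γseq : ℕ → ℝ → Esp n}
    (hcau : ∀ m : ℕ, GCausalOn n g T U (γseq m) s)
    (hunit : ∀ m : ℕ, ∀ᵐ t ∂(volume.restrict s), ‖deriv (γseq m) t‖ = 1)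
    {γ : ℝ → Esp n} (hlip : LocLipOn n γ s) (hmaps : MapsTo γ s U)
    (hconv : ∀ K, K ⊆ s → IsCompact K → TendstoUniformlyOn γseq γ atTop K)
    {t₀ : ℝ} (ht₀ : t₀ ∈ s) (hd : DifferentiableAt ℝ γ t₀) :
    FDCausal n g T (γ t₀) (deriv γ t₀) := by
  have hxU : γ t₀ ∈ U := hmaps ht₀
  have hTx : g (γ t₀) (T (γ t₀)) (T (γ t₀)) < 0 := hT.2 _ hxU
  -- find p ∈ s with p ≠ t₀
  obtain ⟨q, hq⟩ := hint
  obtain ⟨ε, hεpos, hball⟩ := Metric.mem_nhds_iff.1 (mem_interior_iff_mem_nhds.1 hq)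
  have hqs : ∀ r : ℝ, dist r q < ε → r ∈ s := fun r hr => hball hr
  obtain ⟨p, hp, hpne⟩ : ∃ p ∈ s, p ≠ t₀ := by
    by_cases h : q + ε/2 = t₀
    · refine ⟨q - ε/2, hqs _ ?_, fun h2 => ?_⟩
      · rw [Real.dist_eq, show q - ε/2 - q = -(ε/2) by ring, abs_neg,
          abs_of_pos (by linarith)]; linarith
      · rw [← h] at h2; linarith
    · refine ⟨q + ε/2, hqs _ ?_, h⟩
      rw [Real.dist_eq, show q + ε/2 - q = ε/2 by ring, abs_of_pos (by linarith)]; linarith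
  obtain ⟨c₁, hc₁, δ₁, hδ₁, hP₁⟩ := master hg hlor hT.1 hxU hTx hTx hTx
  have hTD : g (γ t₀) (T (γ t₀)) (deriv γ t₀) ≤ -c₁ :=
    slope_bound hconn hcau hunit hlip hconv ht₀ hd hp hpne hc₁ hδ₁ hP₁
  have hD0 : deriv γ t₀ ≠ 0 := by
    intro h
    rw [h] at hTD
    rw [map_zero] at hTD
    linarith
  refine ⟨hD0, ?_, by linarith⟩
  by_contra hpos
  push_neg at hpos
  obtain ⟨L, hL⟩ := hlor _ hxU
  obtain ⟨w, hw1, hw2, hw3⟩ := g_dual L hL hTx hpos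
  obtain ⟨c₂, hc₂, δ₂, hδ₂, hP₂⟩ := master hg hlor hT.1 hxU hTx hw1 hw2
  have := slope_bound hconn hcau hunit hlip hconv ht₀ hd hp hpne hc₂ hδ₂ hP₂
  linarith [hw3]

/-- Propositions 2.26/2.27, chart version: uniform limits of causal curves are causal. -/
theorem stmt_8 (n : ℕ) (hn : 1 ≤ n) (U : Set (Esp n)) (hU : IsOpen U)
    (g : Esp n → Esp n →ₗ[ℝ] Esp n →ₗ[ℝ] ℝ) (hg : IsSymmCont n g U)
    (hlor : IsLorentzian n g U)
    (T : Esp n → Esp n) (hT : IsTimeOrientation n g T U)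
    (s : Set ℝ) (hconn : s.OrdConnected) (hint : (interior s).Nonempty)
    (γseq : ℕ → ℝ → Esp n)
    (hcau : ∀ m : ℕ, GCausalOn n g T U (γseq m) s)
    (hunit : ∀ m : ℕ, ∀ᵐ t ∂(volume.restrict s), ‖deriv (γseq m) t‖ = 1)
    (γ : ℝ → Esp n) (hlip : LocLipOn n γ s) (hmaps : MapsTo γ s U)
    (hconv : ∀ K, K ⊆ s → IsCompact K → TendstoUniformlyOn γseq γ atTop K) :
    GCausalOn n g T U γ s ∧
      ∀ t ∈ s, DifferentiableAt ℝ γ t → deriv γ t ≠ 0 →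
        FDCausal n g T (γ t) (deriv γ t) := by
  have key' : ∀ t ∈ s, DifferentiableAt ℝ γ t → FDCausal n g T (γ t) (deriv γ t) :=
    fun t ht hdt => key_causal hg hlor hT hconn hint hcau hunit hlip hmaps hconv ht hdt
  refine ⟨⟨hlip, hmaps, ?_⟩, fun t ht hdt _ => key' t ht hdt⟩
  have hsm : MeasurableSet s := hconn.measurableSet
  -- γ has locally bounded variation on s
  have hlbv : LocallyBoundedVariationOn γ s := by
    intro a b ha hb
    rcases le_total a b with hab | hab
    · have hIcc : Icc a b ⊆ s := hconn.out ha hb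
      obtain ⟨C, hC⟩ := hlip (Icc a b) hIcc isCompact_Icc
      have hid : BoundedVariationOn id (Icc a b) := by
        have h1 := (@monotoneOn_id ℝ _ (Icc a b)).locallyBoundedVariationOn a b
          (left_mem_Icc.2 hab) (right_mem_Icc.2 hab)
        rwa [inter_self] at h1
      have h2 : BoundedVariationOn (γ ∘ id) (Icc a b) :=
        hC.comp_boundedVariationOn (mapsTo_id _) hid
      exact (h2.mono inter_subset_right : BoundedVariationOn (γ ∘ id) (s ∩ Icc a b))
    · have hempty : s ∩ Icc a b ⊆ Icc b a := fun t ht => by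
        rcases ht.2 with ⟨h1, h2⟩
        exact ⟨by linarith, by linarith⟩
      obtain ⟨C, hC⟩ := hlip (Icc b a) (hconn.out hb ha) isCompact_Icc
      have hid : BoundedVariationOn id (Icc b a) := by
        have h1 := (@monotoneOn_id ℝ _ (Icc b a)).locallyBoundedVariationOn b a
          (left_mem_Icc.2 hab) (right_mem_Icc.2 hab)
        rwa [inter_self] at h1
      have h2 : BoundedVariationOn (γ ∘ id) (Icc b a) :=
        hC.comp_boundedVariationOn (mapsTo_id _) hid
      exact h2.mono hempty
  have hae1 : ∀ᵐ t, t ∈ s → DifferentiableWithinAt ℝ γ s t :=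
    hlbv.ae_differentiableWithinAt_of_mem
  -- a.e. point of s is interior
  have hbd : volume (s \ interior s) = 0 := by
    have hsub : s \ interior s ⊆ {t | IsLeast s t} ∪ {t | IsGreatest s t} := by
      rintro t ⟨hts, htni⟩
      obtain ⟨q, hq⟩ := hint
      have htq : t ≠ q := fun h => htni (h ▸ hq)
      rcases lt_or_gt_of_ne htq with hlt | hgt
      · left
        refine ⟨hts, fun r hr => ?_⟩
        by_contra hrt
        push_neg at hrt
        have hsub2 : Ioo r q ⊆ s := Ioo_subset_Icc_self.trans (hconn.out hr (interior_subset hq))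
        exact htni ((interior_maximal hsub2 isOpen_Ioo) ⟨hrt, hlt⟩)
      · right
        refine ⟨hts, fun r hr => ?_⟩
        by_contra hrt
        push_neg at hrt
        have hsub2 : Ioo q r ⊆ s := Ioo_subset_Icc_self.trans (hconn.out (interior_subset hq) hr)
        exact htni ((interior_maximal hsub2 isOpen_Ioo) ⟨hgt, hrt⟩)
    refine measure_mono_null hsub (measure_union_null ?_ ?_)
    · exact Set.Subsingleton.measure_zero (fun a ha b hb => ha.unique hb) _
    · exact Set.Subsingleton.measure_zero (fun a ha b hb => ha.unique hb) _
  have hae2 : ∀ᵐ t ∂(volume.restrict s), t ∈ interior s := by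
    rw [ae_iff]
    rw [Measure.restrict_apply' hsm]
    refine measure_mono_null ?_ hbd
    rintro t ⟨htni, hts⟩
    exact ⟨hts, htni⟩
  have hae3 : ∀ᵐ t ∂(volume.restrict s), t ∈ s → DifferentiableWithinAt ℝ γ s t :=
    hae1.filter_mono (ae_mono Measure.restrict_le_self)
  filter_upwards [hae2, ae_restrict_mem hsm, hae3] with t hti hts hdwa
  have hdt : DifferentiableAt ℝ γ t :=
    (hdwa hts).differentiableAt (mem_interior_iff_mem_nhds.1 hti)
  exact ⟨hdt, key' t hts hdt⟩
end
end
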